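/- arXiv:1203.1256 — 6 statements merged into one kernel-verified Lean document; each statement's English description precedes it below -/
import Mathlib

section
/- Matrix-Tree Theorem (eigenvalue form): For a network (G,c), let det₀Δ denote the product of the nonzero eigenvalues of the Laplacian Δ, counted with multiplicity (Δ is real symmetric positive semidefinite, so all eigenvalues are real and nonnegative). Then (1/|V|)·det₀Δ = Σ_T ∏_{e∈T} c_e, where the sum is over all spanning trees T of G. -/
open Matrix BigOperators
open scoped Classical

/-- The Laplacian of a finite graph with edge conductances `c`. -/
noncomputable def glap {V : Type*} [Fintype V] [DecidableEq V] (G : SimpleGraph V)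
    (c : Sym2 V → ℝ) : Matrix V V ℝ :=
  Matrix.of fun v w =>
    if v = w then ∑ u, if G.Adj v u then c s(v, u) else 0
    else if G.Adj v w then -c s(v, w) else 0

/-- A spanning tree of `G`, as a set of edges: contained in the edges of `G`,
connected and acyclic (as a graph on the full vertex set `V`). -/
def IsSpanningTree {V : Type*} (G : SimpleGraph V) (T : Finset (Sym2 V)) : Prop :=
  ↑T ⊆ G.edgeSet ∧ (SimpleGraph.fromEdgeSet (↑T : Set (Sym2 V))).Connected ∧
    (SimpleGraph.fromEdgeSet (↑T : Set (Sym2 V))).IsAcyclic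

/-!
Write `Δ = N W Nᵀ`, where `N` is the signed vertex–edge incidence matrix of the complete graph on
`V` and `W` is the diagonal matrix of conductances (zero off `G`). Fix a vertex `v₀` and let `N₀` be
`N` without the row of `v₀`. By Cauchy–Binet, the principal minor of `Δ` at `v₀` is the sum, over
sets `S` of `|V| - 1` edges, of `(∏_{e ∈ S} c_e) · det (N₀)_S ^ 2`. If `S` is a spanning tree then
`det (N₀)_S = ±1`: matching each vertex with the edge to its parent and ordering the vertices by
distance to `v₀` makes `(N₀)_S` triangular. A set of `|V| - 1` edges that is not a spanning tree is
disconnected, and the indicator of a component missing `v₀` lies in the left kernel of `(N₀)_S`.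
So every diagonal entry of `adj Δ` is the weighted tree count `τ`, and `tr (adj Δ) = |V| τ`.

Spectrally, `tr (adj Δ) = ∑ᵢ ∏_{j ≠ i} λⱼ`. As `det Δ = 0` some eigenvalue vanishes, and as
`τ > 0` only one does, so `∑ᵢ ∏_{j ≠ i} λⱼ` is the product of the nonzero eigenvalues.
-/

open Finset Function

theorem Function.Injective.exists_perm_eq_comp {m E : Type*} {f g : m → E} (hf : f.Injective)
    (hg : g.Injective) (h : Set.range f = Set.range g) : ∃ σ : Equiv.Perm m, f = g ∘ σ :=
  ⟨(Equiv.ofInjective f hf).trans ((Equiv.setCongr h).trans (Equiv.ofInjective g hg).symm),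
    funext fun i => by simp [Equiv.apply_ofInjective_symm]⟩

section Enumerations

variable {m E : Type*} [Fintype m] [DecidableEq E]

theorem Finset.exists_injective_image_univ_eq (S : Finset E) (h : S.card = Fintype.card m) :
    ∃ f : m → E, f.Injective ∧ univ.image f = S := by
  let e : m ≃ S := Fintype.equivOfCardEq (by simp [h])
  refine ⟨Subtype.val ∘ e, Subtype.val_injective.comp e.injective, ?_⟩
  ext x
  simp only [mem_image, mem_univ, true_and, Function.comp_apply]
  exact ⟨fun ⟨i, hi⟩ => hi ▸ (e i).2, fun hx => ⟨e.symm ⟨x, hx⟩, by simp⟩⟩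

theorem Finset.filter_injective_image_univ_eq [DecidableEq m] [Fintype E] {g : m → E}
    (hg : g.Injective) :
    univ.filter (fun f : m → E => f.Injective ∧ univ.image f = univ.image g)
      = univ.image (fun σ : Equiv.Perm m => g ∘ σ) := by
  ext f
  simp only [mem_filter, mem_univ, true_and, mem_image]
  constructor
  · rintro ⟨hf, himg⟩
    obtain ⟨σ, rfl⟩ := hf.exists_perm_eq_comp hg (by
      simpa using congrArg (fun S : Finset E => (S : Set E)) himg)
    exact ⟨σ, rfl⟩
  · rintro ⟨σ, rfl⟩
    exact ⟨hg.comp σ.injective, by rw [← image_image, image_univ_equiv]⟩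

end Enumerations

theorem Finset.sum_prod_erase_eq_prod_filter_ne_zero {ι R : Type*} [Fintype ι] [DecidableEq ι]
    [CommSemiring R] [NoZeroDivisors R] [Nontrivial R] (f : ι → R) (hprod : ∏ i, f i = 0)
    (hsum : ∑ i, ∏ j ∈ univ.erase i, f j ≠ 0) :
    ∑ i, ∏ j ∈ univ.erase i, f j = ∏ i ∈ univ.filter (f · ≠ 0), f i := by
  obtain ⟨i₀, -, hi₀⟩ := prod_eq_zero_iff.1 hprod
  have hsingle : ∑ i, ∏ j ∈ univ.erase i, f j = ∏ j ∈ univ.erase i₀, f j :=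
    sum_eq_single i₀ (fun i _ hi => prod_eq_zero (mem_erase.2 ⟨Ne.symm hi, mem_univ _⟩) hi₀)
      (by simp)
  rw [hsingle] at hsum ⊢
  congr 1
  ext j
  simp only [mem_erase, mem_univ, mem_filter, and_true, true_and]
  exact ⟨fun hj h0 => hsum (prod_eq_zero (mem_erase.2 ⟨hj, mem_univ _⟩) h0),
    fun hj h => hj (h ▸ hi₀)⟩

namespace Matrix

variable {m E R : Type*} [Fintype m] [DecidableEq m] [Fintype E] [CommRing R]

theorem det_mul_eq_sum_prod_mul_det_submatrix (A : Matrix m E R) (B : Matrix E m R) :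
    (A * B).det = ∑ f : m → E, (∏ i, A i (f i)) * (B.submatrix f id).det := by
  have hrows : A * B = fun i => ∑ e, A i e • B e := by
    ext i j
    simp [mul_apply]
  have := (detRowAlternating (n := m) (R := R)).toMultilinearMap.map_sum fun i e => A i e • B e
  simp only [AlternatingMap.coe_multilinearMap, MultilinearMap.map_smul_univ] at this
  rw [hrows]
  exact this

/-- The Cauchy–Binet formula. -/
theorem det_mul_eq_sum_det_submatrix_mul_det_submatrix [DecidableEq E] (A : Matrix m E R)
    (B : Matrix E m R) (enum : {S : Finset E // S.card = Fintype.card m} → m → E)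
    (henum : ∀ S, (enum S).Injective ∧ univ.image (enum S) = S) :
    (A * B).det = ∑ S, (A.submatrix id (enum S)).det * (B.submatrix (enum S) id).det := by
  have hnoninj : ∀ f : m → E, ¬ f.Injective → (∏ i, A i (f i)) * (B.submatrix f id).det = 0 := by
    intro f hf
    obtain ⟨i, j, hfij, hij⟩ := Function.not_injective_iff.mp hf
    rw [det_zero_of_row_eq hij (funext fun k => by simp [hfij]), mul_zero]
  have hcard : ∀ f ∈ univ.filter (fun f : m → E => f.Injective),
      univ.image f ∈ univ.filter (fun S : Finset E => S.card = Fintype.card m) := fun f hf => by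
    simp [card_image_of_injective _ (mem_filter.1 hf).2]
  rw [det_mul_eq_sum_prod_mul_det_submatrix,
    ← sum_filter_of_ne fun f _ h => not_not.1 (mt (hnoninj f) h),
    ← sum_fiberwise_of_maps_to hcard,
    sum_subtype _ (p := fun S : Finset E => S.card = Fintype.card m) fun S => by simp]
  refine sum_congr rfl fun S _ => ?_
  obtain ⟨he, himg⟩ := henum S
  have hfiber : univ.filter (fun f : m → E => f.Injective ∧ univ.image f = S.1)
      = univ.image (fun σ : Equiv.Perm m => enum S ∘ σ) := by
    rw [← filter_injective_image_univ_eq he, himg]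
  have hdet (σ : Equiv.Perm m) : (B.submatrix (enum S ∘ σ) id).det
      = Equiv.Perm.sign σ * (B.submatrix (enum S) id).det :=
    det_permute σ (B.submatrix (enum S) id)
  rw [filter_filter, hfiber, sum_image fun σ _ τ _ h =>
    Equiv.ext (congrFun ((he.comp_left.eq_iff).1 h))]
  simp_rw [hdet, ← det_transpose (A.submatrix id (enum S)), det_apply', sum_mul]
  refine sum_congr rfl fun σ _ => ?_
  simp only [Function.comp_apply, submatrix_apply, id_eq, transpose_apply]
  ring

theorem det_eq_prod_diag_of_lt_of_ne_zero {α : Type*} [LinearOrder α] (M : Matrix m m R)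
    (r : m → α) (h : ∀ i j, i ≠ j → M i j ≠ 0 → r i < r j) : M.det = ∏ i, M i i := by
  -- a linear order on `m` refining `r`, for which `M` is upper triangular
  let key : m → α ×ₗ Fin (Fintype.card m) := fun i => toLex (r i, Fintype.equivFin m i)
  have hkey : key.Injective := fun i j hij =>
    (Fintype.equivFin m).injective (congrArg (fun p => (ofLex p).2) hij)
  let _ : LinearOrder m := LinearOrder.lift' key hkey
  refine det_of_isUpperTriangular fun i j hji => by_contra fun hij => ?_
  exact absurd (show key j < key i from hji)
    (not_lt.2 (Prod.Lex.le_iff.2 (Or.inl (h i j (ne_of_gt hji) hij))))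

theorem adjugate_apply_self (A : Matrix m m R) (i : m) :
    A.adjugate i i = (A.submatrix (Subtype.val : {j // j ≠ i} → m) Subtype.val).det := by
  rw [adjugate_apply, twoBlockTriangular_det _ (· ≠ i) fun k hk j hj => by
    simp [not_not.1 hk, hj]]
  have hblock : toSquareBlockProp (A.updateRow i (Pi.single i 1)) (fun j => ¬ j ≠ i) = 1 := by
    ext ⟨j, hj⟩ ⟨k, hk⟩
    simp only [not_not] at hj hk
    subst hj hk
    simp [toSquareBlockProp]
  rw [hblock, det_one, mul_one]
  congr 1
  ext ⟨j, hj⟩ ⟨k, hk⟩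
  simp [toSquareBlockProp, hj]

theorem IsHermitian.trace_adjugate {𝕜 : Type*} [RCLike 𝕜] {A : Matrix m m 𝕜}
    (hA : A.IsHermitian) :
    A.adjugate.trace = ∑ i, ∏ j ∈ univ.erase i, (hA.eigenvalues j : 𝕜) := by
  have hU : star (hA.eigenvectorUnitary : Matrix m m 𝕜) * hA.eigenvectorUnitary = 1 :=
    mem_unitaryGroup_iff'.mp hA.eigenvectorUnitary.2
  conv_lhs => rw [hA.spectral_theorem, Unitary.conjStarAlgAut_apply]
  rw [adjugate_mul_distrib, adjugate_mul_distrib, trace_mul_comm, Matrix.mul_assoc,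
    ← adjugate_mul_distrib, hU, adjugate_one, Matrix.mul_one, adjugate_diagonal, trace_diagonal]
  rfl

end Matrix

theorem Fintype.card_subtype_ne_add_one {V : Type*} [Fintype V] [DecidableEq V] (v₀ : V) :
    Fintype.card {v // v ≠ v₀} + 1 = Fintype.card V := by
  have := Fintype.card_pos_iff.2 ⟨v₀⟩
  simp only [ne_eq, Fintype.card_subtype_compl, Fintype.card_unique]
  omega

theorem SimpleGraph.Connected.exists_adj_dist_add_one {V : Type*} {G : SimpleGraph V}
    (hG : G.Connected) {v w : V} (hvw : v ≠ w) :
    ∃ u, G.Adj v u ∧ G.dist u w + 1 = G.dist v w := by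
  obtain ⟨p, hp⟩ := hG.exists_walk_length_eq_dist v w
  cases p with
  | nil => exact absurd rfl hvw
  | cons hadj q =>
    obtain ⟨q', hq'⟩ := hG.exists_walk_length_eq_dist _ w
    have h1 := SimpleGraph.dist_le q
    have h2 := SimpleGraph.dist_le (SimpleGraph.Walk.cons hadj q')
    simp only [SimpleGraph.Walk.length_cons] at hp h2
    exact ⟨_, hadj, by omega⟩

section SpanningTrees

open SimpleGraph

variable {V : Type*} [Fintype V] {G : SimpleGraph V}

theorem isSpanningTree_iff_connected_and_card {T : Finset (Sym2 V)} (hT : ↑T ⊆ G.edgeSet) :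
    IsSpanningTree G T ↔
      (fromEdgeSet (T : Set (Sym2 V))).Connected ∧ T.card + 1 = Fintype.card V := by
  have hedges : (fromEdgeSet (T : Set (Sym2 V))).edgeSet = T := by
    rw [edgeSet_fromEdgeSet]
    exact sdiff_eq_left.2 (Set.disjoint_left.2 fun e he => G.not_isDiag_of_mem_edgeSet (hT he))
  rw [IsSpanningTree, ← isTree_iff, isTree_iff_connected_and_card, hedges, Nat.card_coe_set_eq,
    Set.ncard_coe_finset, Nat.card_eq_fintype_card]
  exact and_iff_right hT

theorem sum_prod_isSpanningTree_pos {c : Sym2 V → ℝ} (hpos : ∀ e ∈ G.edgeSet, 0 < c e)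
    (hconn : G.Connected) : 0 < ∑ T ∈ univ.filter (IsSpanningTree G), ∏ e ∈ T, c e := by
  obtain ⟨T, hTG, hT⟩ := hconn.exists_isTree_le
  have hprod_pos (S : Finset (Sym2 V)) (hS : IsSpanningTree G S) : 0 < ∏ e ∈ S, c e :=
    prod_pos fun e he => hpos e (hS.1 he)
  have hT' : IsSpanningTree G T.edgeFinset := by
    rw [IsSpanningTree, coe_edgeFinset, fromEdgeSet_edgeSet]
    exact ⟨edgeSet_mono hTG, hT.connected, hT.isAcyclic⟩
  exact sum_pos' (fun S hS => (hprod_pos S (mem_filter.1 hS).2).le)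
    ⟨T.edgeFinset, mem_filter.2 ⟨mem_univ _, hT'⟩, hprod_pos _ hT'⟩

end SpanningTrees

section SignedIncidence

variable (R : Type*) [CommRing R] (V : Type*) [DecidableEq V]

/-- The orientation of an edge `e`, from `e.out.1` to `e.out.2`, is arbitrary: nothing below
depends on it. -/
noncomputable def signedIncMatrix : Matrix V (Sym2 V) R :=
  Matrix.of fun v e =>
    if e.IsDiag then 0 else if v = e.out.1 then 1 else if v = e.out.2 then -1 else 0

variable {R V}

theorem signedIncMatrix_apply_of_isDiag {e : Sym2 V} (he : e.IsDiag) (v : V) :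
    signedIncMatrix R V v e = 0 := by
  simp [signedIncMatrix, he]

theorem signedIncMatrix_apply_of_notMem {v : V} {e : Sym2 V} (hv : v ∉ e) :
    signedIncMatrix R V v e = 0 := by
  have h1 : v ≠ e.out.1 := fun h => hv (h ▸ Sym2.out_fst_mem e)
  have h2 : v ≠ e.out.2 := fun h => hv (h ▸ Sym2.out_snd_mem e)
  simp [signedIncMatrix, h1, h2]

theorem signedIncMatrix_apply_mk_cases {a b : V} (hab : a ≠ b) :
    signedIncMatrix R V a s(a, b) = 1 ∧ signedIncMatrix R V b s(a, b) = -1 ∨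
      signedIncMatrix R V a s(a, b) = -1 ∧ signedIncMatrix R V b s(a, b) = 1 := by
  have hout : s(s(a, b).out.1, s(a, b).out.2) = s(a, b) := Quot.out_eq _
  rcases Sym2.eq_iff.1 hout with ⟨h1, h2⟩ | ⟨h1, h2⟩ <;>
    simp [signedIncMatrix, h1, h2, hab, hab.symm]

theorem signedIncMatrix_apply_mk_add {a b : V} (hab : a ≠ b) :
    signedIncMatrix R V a s(a, b) + signedIncMatrix R V b s(a, b) = 0 := by
  rcases signedIncMatrix_apply_mk_cases (R := R) hab with ⟨h1, h2⟩ | ⟨h1, h2⟩ <;> simp [h1, h2]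

theorem signedIncMatrix_apply_mk_mul_self {a b : V} (hab : a ≠ b) :
    signedIncMatrix R V a s(a, b) * signedIncMatrix R V a s(a, b) = 1 := by
  rcases signedIncMatrix_apply_mk_cases (R := R) hab with ⟨h1, -⟩ | ⟨h1, -⟩ <;> simp [h1]

variable [Fintype V]

theorem vecMul_signedIncMatrix_apply_mk {x : V → R} {a b : V} (hx : x a = x b) :
    (x ᵥ* signedIncMatrix R V) s(a, b) = 0 := by
  by_cases hab : a = b
  · simp [vecMul, dotProduct, signedIncMatrix_apply_of_isDiag (Sym2.mk_isDiag_iff.2 hab)]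
  rw [vecMul, dotProduct, Fintype.sum_eq_add a b hab fun v hv =>
    by rw [signedIncMatrix_apply_of_notMem (by simpa using hv), mul_zero], hx, ← mul_add,
    signedIncMatrix_apply_mk_add hab, mul_zero]

open SimpleGraph

theorem det_signedIncMatrix_submatrix_sq_of_connected {v₀ : V} {T : Finset (Sym2 V)}
    (hT : (fromEdgeSet (T : Set (Sym2 V))).Connected) {e : {v // v ≠ v₀} → Sym2 V}
    (he : e.Injective) (himg : univ.image e = T) :
    ((signedIncMatrix R V).submatrix Subtype.val e).det ^ 2 = 1 := by
  set H := fromEdgeSet (T : Set (Sym2 V))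
  choose p hadj hdist using fun i : {v // v ≠ v₀} => hT.exists_adj_dist_add_one i.2
  set f : {v // v ≠ v₀} → Sym2 V := fun i => s(i.1, p i)
  have hf : f.Injective := by
    intro i j hij
    rcases Sym2.eq_iff.1 hij with ⟨h, -⟩ | ⟨h1, h2⟩
    · exact Subtype.ext h
    · have hi := hdist i
      have hj := hdist j
      rw [h2] at hi
      rw [← h1] at hj
      omega
  have hfT : univ.image f = T := by
    refine eq_of_subset_of_card_le (fun x hx => ?_) ?_
    · obtain ⟨i, -, rfl⟩ := mem_image.1 hx
      exact ((fromEdgeSet_adj _).1 (hadj i)).1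
    · rw [card_image_of_injective _ hf, ← himg, card_image_of_injective _ he]
  obtain ⟨σ, hσ⟩ := hf.exists_perm_eq_comp he (by
    simpa using congrArg (fun S : Finset (Sym2 V) => (S : Set (Sym2 V))) (hfT.trans himg.symm))
  have htri : ((signedIncMatrix R V).submatrix Subtype.val f).det
      = ∏ i, signedIncMatrix R V i.1 (f i) :=
    det_eq_prod_diag_of_lt_of_ne_zero _ (fun i => H.dist i.1 v₀)
      fun i j hij (hne : signedIncMatrix R V i.1 (f j) ≠ 0) => by
        have hmem : i.1 ∈ s(j.1, p j) := by_contra (hne ∘ signedIncMatrix_apply_of_notMem (R := R))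
        rcases Sym2.mem_iff.1 hmem with h | h
        · exact absurd (Subtype.ext h) hij
        · have := hdist j
          simp only [h]
          omega
  have hperm : ((signedIncMatrix R V).submatrix Subtype.val f).det
      = Equiv.Perm.sign σ * ((signedIncMatrix R V).submatrix Subtype.val e).det := by
    rw [hσ]
    exact det_permute' σ ((signedIncMatrix R V).submatrix Subtype.val e)
  have hsign : ((Equiv.Perm.sign σ : ℤ) : R) ^ 2 = 1 := by
    rw [← Int.cast_pow, ← Units.val_pow_eq_pow_val, Int.units_sq, Units.val_one, Int.cast_one]
  calc ((signedIncMatrix R V).submatrix Subtype.val e).det ^ 2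
      = ((signedIncMatrix R V).submatrix Subtype.val f).det ^ 2 := by
        rw [hperm, mul_pow, hsign, one_mul]
    _ = ∏ i, signedIncMatrix R V i.1 (f i) ^ 2 := by rw [htri, prod_pow]
    _ = 1 := prod_eq_one fun i _ => (sq _).trans (signedIncMatrix_apply_mk_mul_self (hadj i).ne)

theorem det_signedIncMatrix_submatrix_eq_zero_of_not_connected [IsDomain R] {v₀ : V}
    {T : Finset (Sym2 V)} (hT : ¬ (fromEdgeSet (T : Set (Sym2 V))).Connected)
    {e : {v // v ≠ v₀} → Sym2 V} (he : ∀ i, e i ∈ T) :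
    ((signedIncMatrix R V).submatrix Subtype.val e).det = 0 := by
  set H := fromEdgeSet (T : Set (Sym2 V))
  obtain ⟨u, hu⟩ : ∃ u, ¬ H.Reachable u v₀ := by
    by_contra! h
    exact hT ((connected_iff_exists_forall_reachable H).2 ⟨v₀, fun w => (h w).symm⟩)
  have huv₀ : u ≠ v₀ := fun h => hu (h ▸ Reachable.refl u)
  set x : V → R := fun v => if H.Reachable u v then 1 else 0
  have hx (j : {v // v ≠ v₀}) : (x ᵥ* signedIncMatrix R V) (e j) = 0 := by
    have hj := he j
    generalize e j = z at hj ⊢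
    induction z using Sym2.ind with
    | h a b =>
      refine vecMul_signedIncMatrix_apply_mk ?_
      by_cases hab : a = b
      · rw [hab]
      · have hadj : H.Adj a b := (fromEdgeSet_adj _).2 ⟨hj, hab⟩
        have hreach : H.Reachable u a ↔ H.Reachable u b :=
          ⟨fun h => h.trans hadj.reachable, fun h => h.trans hadj.symm.reachable⟩
        simp only [x, hreach]
  refine exists_vecMul_eq_zero_iff.1 ⟨fun i => x i, fun h => ?_, funext fun j => ?_⟩
  · simpa [x] using congrFun h ⟨u, huv₀⟩
  · simpa [vecMul, dotProduct, Fintype.sum_eq_add_sum_subtype_ne _ v₀, x, hu] using hx j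

theorem det_signedIncMatrix_submatrix_sq_mul_prod_indicator [IsDomain R] (G : SimpleGraph V)
    (c : Sym2 V → R) {v₀ : V} {S : Finset (Sym2 V)} {e : {v // v ≠ v₀} → Sym2 V}
    (he : e.Injective) (himg : univ.image e = S) :
    ((signedIncMatrix R V).submatrix Subtype.val e).det ^ 2 * ∏ x ∈ S, G.edgeSet.indicator c x
      = if IsSpanningTree G S then ∏ x ∈ S, c x else 0 := by
  by_cases hSG : ↑S ⊆ G.edgeSet
  · have hcard : S.card + 1 = Fintype.card V := by
      rw [← himg, card_image_of_injective _ he, card_univ, Fintype.card_subtype_ne_add_one]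
    rw [prod_congr rfl fun x hx => Set.indicator_of_mem (hSG hx) c,
      isSpanningTree_iff_connected_and_card hSG]
    by_cases hconn : (fromEdgeSet (S : Set (Sym2 V))).Connected
    · rw [if_pos ⟨hconn, hcard⟩, det_signedIncMatrix_submatrix_sq_of_connected hconn he himg,
        one_mul]
    · rw [if_neg fun h => hconn h.1, det_signedIncMatrix_submatrix_eq_zero_of_not_connected hconn
        fun i => himg ▸ mem_image_of_mem e (mem_univ i), zero_pow two_ne_zero, zero_mul]
  · obtain ⟨x, hxS, hxG⟩ := Set.not_subset.1 hSG
    rw [prod_eq_zero hxS (Set.indicator_of_notMem hxG c), mul_zero, if_neg fun h => hSG h.1]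

end SignedIncidence

section Laplacian

open SimpleGraph

variable {V : Type*} [Fintype V] [DecidableEq V]

theorem glap_eq_signedIncMatrix_mul (G : SimpleGraph V) (c : Sym2 V → ℝ) :
    glap G c
      = signedIncMatrix ℝ V * diagonal (G.edgeSet.indicator c) * (signedIncMatrix ℝ V)ᵀ := by
  ext v u
  rw [mul_apply]
  simp only [mul_diagonal, transpose_apply]
  by_cases hvu : v = u
  · subst hvu
    rw [show glap G c v v = ∑ u, if G.Adj v u then c s(v, u) else 0 by simp [glap]]
    refine Fintype.sum_of_injective (fun u => s(v, u)) (fun _ _ => Sym2.congr_right.1) _ _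
      (fun e he => ?_) fun u => ?_
    · have hv : v ∉ e := fun hv => he (Sym2.mem_iff_exists.1 hv |>.imp fun _ h => h.symm)
      simp [signedIncMatrix_apply_of_notMem hv]
    · by_cases huv : v = u
      · subst huv
        simp
      · rw [mul_right_comm, signedIncMatrix_apply_mk_mul_self huv, one_mul]
        simp [Set.indicator_apply]
  · rw [Fintype.sum_eq_single s(v, u) fun e he => ?_]
    · have hu : signedIncMatrix ℝ V u s(v, u) = -signedIncMatrix ℝ V v s(v, u) :=
        eq_neg_of_add_eq_zero_right (signedIncMatrix_apply_mk_add hvu)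
      rw [hu, mul_neg, mul_right_comm, signedIncMatrix_apply_mk_mul_self hvu, one_mul]
      simp only [glap, of_apply, hvu, if_false, Set.indicator_apply, mem_edgeSet]
      split_ifs <;> simp
    · by_cases hv : v ∈ e
      · by_cases hu : u ∈ e
        · exact absurd ((Sym2.mem_and_mem_iff hvu).1 ⟨hv, hu⟩) he
        · simp [signedIncMatrix_apply_of_notMem hu]
      · simp [signedIncMatrix_apply_of_notMem hv]

theorem det_glap [Nonempty V] (G : SimpleGraph V) (c : Sym2 V → ℝ) : (glap G c).det = 0 := by
  refine exists_vecMul_eq_zero_iff.1 ⟨1, one_ne_zero, ?_⟩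
  have h : (1 : V → ℝ) ᵥ* signedIncMatrix ℝ V = 0 := funext fun e => by
    induction e using Sym2.ind with
    | h a b => exact vecMul_signedIncMatrix_apply_mk rfl
  rw [glap_eq_signedIncMatrix_mul, ← vecMul_vecMul, ← vecMul_vecMul, h, zero_vecMul, zero_vecMul]

theorem det_glap_submatrix_eq_sum_isSpanningTree (G : SimpleGraph V) (c : Sym2 V → ℝ) (v₀ : V) :
    ((glap G c).submatrix (Subtype.val : {v // v ≠ v₀} → V) Subtype.val).det
      = ∑ T ∈ univ.filter (IsSpanningTree G), ∏ e ∈ T, c e := by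
  set N := (signedIncMatrix ℝ V).submatrix (Subtype.val : {v // v ≠ v₀} → V) id
  have hfac : (glap G c).submatrix Subtype.val Subtype.val
      = N * diagonal (G.edgeSet.indicator c) * Nᵀ := by
    rw [glap_eq_signedIncMatrix_mul]
    rfl
  choose enum henum using fun S : {S : Finset (Sym2 V) // S.card = Fintype.card {v // v ≠ v₀}} =>
    S.1.exists_injective_image_univ_eq S.2
  have hterm (S) : ((N * diagonal (G.edgeSet.indicator c)).submatrix id (enum S)).det
      * (Nᵀ.submatrix (enum S) id).det = if IsSpanningTree G S.1 then ∏ x ∈ S.1, c x else 0 := by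
    obtain ⟨he, himg⟩ := henum S
    have hcols : (N * diagonal (G.edgeSet.indicator c)).submatrix id (enum S)
        = (signedIncMatrix ℝ V).submatrix Subtype.val (enum S)
          * diagonal (G.edgeSet.indicator c ∘ enum S) := by
      ext i j
      simp [N, mul_diagonal]
    have hprod : ∏ i, G.edgeSet.indicator c (enum S i) = ∏ x ∈ S.1, G.edgeSet.indicator c x := by
      rw [← himg, prod_image fun i _ j _ h => he h]
    rw [← det_signedIncMatrix_submatrix_sq_mul_prod_indicator G c he himg, hcols, det_mul,
      det_diagonal, show Nᵀ.submatrix (enum S) id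
        = ((signedIncMatrix ℝ V).submatrix Subtype.val (enum S))ᵀ from rfl, det_transpose]
    simp only [Function.comp_apply, hprod]
    ring
  have hcard (T) (hT : IsSpanningTree G T) : T.card = Fintype.card {v // v ≠ v₀} := by
    have := ((isSpanningTree_iff_connected_and_card hT.1).1 hT).2
    have := Fintype.card_subtype_ne_add_one v₀
    omega
  rw [hfac, det_mul_eq_sum_det_submatrix_mul_det_submatrix _ _ enum henum,
    sum_congr rfl fun S _ => hterm S, sum_filter,
    ← sum_subtype (univ.filter fun S : Finset (Sym2 V) => S.card = Fintype.card {v // v ≠ v₀})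
      (by simp) fun S => if IsSpanningTree G S then ∏ x ∈ S, c x else 0]
  exact sum_filter_of_ne fun T _ hT => hcard T (not_not.1 fun h => hT (if_neg h))

theorem trace_adjugate_glap (G : SimpleGraph V) (c : Sym2 V → ℝ) :
    (glap G c).adjugate.trace
      = Fintype.card V * ∑ T ∈ univ.filter (IsSpanningTree G), ∏ e ∈ T, c e := by
  simp only [trace, Matrix.diag, adjugate_apply_self, det_glap_submatrix_eq_sum_isSpanningTree,
    sum_const, card_univ, nsmul_eq_mul]

end Laplacian

theorem matrix_tree_eigenvalue_form_general {V : Type*} [Fintype V] [DecidableEq V]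
    (G : SimpleGraph V) (c : Sym2 V → ℝ)
    (hpos : ∀ e ∈ G.edgeSet, 0 < c e) (hconn : G.Connected)
    (hH : (glap G c).IsHermitian) :
    (1 / (Fintype.card V : ℝ)) *
      ∏ i ∈ Finset.univ.filter (fun i => hH.eigenvalues i ≠ 0), hH.eigenvalues i
    = ∑ T ∈ Finset.univ.filter (fun T : Finset (Sym2 V) => IsSpanningTree G T),
        ∏ e ∈ T, c e := by
  have : Nonempty V := hconn.nonempty
  have hτ := sum_prod_isSpanningTree_pos hpos hconn
  have htrace : ∑ i, ∏ j ∈ univ.erase i, hH.eigenvalues j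
      = Fintype.card V * ∑ T ∈ univ.filter (IsSpanningTree G), ∏ e ∈ T, c e := by
    simpa [trace_adjugate_glap] using hH.trace_adjugate.symm
  have hprod : ∏ i, hH.eigenvalues i = 0 := by
    simpa [det_glap, eq_comm] using hH.det_eq_prod_eigenvalues
  rw [← sum_prod_erase_eq_prod_filter_ne_zero _ hprod (by
    rw [htrace]
    exact mul_ne_zero (Nat.cast_ne_zero.2 Fintype.card_ne_zero) hτ.ne'), htrace]
  field_simp

/-- Matrix-Tree theorem, eigenvalue form: the product of the nonzero eigenvalues
(with multiplicity) of the Laplacian of a connected network, divided by the number of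
vertices, equals the weighted sum of spanning trees. -/
theorem matrix_tree_eigenvalue_form {V : Type*} [Fintype V] [DecidableEq V] [Nonempty V]
    (G : SimpleGraph V) (c : Sym2 V → ℝ)
    (hpos : ∀ e ∈ G.edgeSet, 0 < c e) (hconn : G.Connected)
    (hH : (glap G c).IsHermitian) :
    (1 / (Fintype.card V : ℝ)) *
      ∏ i ∈ Finset.univ.filter (fun i => hH.eigenvalues i ≠ 0), hH.eigenvalues i
    = ∑ T ∈ Finset.univ.filter (fun T : Finset (Sym2 V) => IsSpanningTree G T),
        ∏ e ∈ T, c e :=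
  matrix_tree_eigenvalue_form_general G c hpos hconn hH
end

section
/- Rooted spanning forest theorem: For a network (G,c) and a nonempty subset B ⊆ V, the determinant of the Dirichlet Laplacian Δ_B (the submatrix of Δ whose rows and columns are indexed by V∖B) equals Σ_F ∏_{e∈F} c_e, where the sum is over all subsets F of edges such that (V,F) has no cycles and each connected component of (V,F) contains exactly one vertex of B. -/
/-!
Row `v ∉ B` of the Dirichlet Laplacian is `∑ᵤ c(v,u) (e_v - e_u)`, so by multilinearity its
determinant is a sum over parent maps `p : V ∖ B → V` with `p v` adjacent to `v` of
`∏ᵥ c(v, p v) · det (1 - P)`, where `P` is the matrix of `p` on `V ∖ B`. This determinant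
is `1` when the orbit of every vertex under `p` reaches `B` (then `1 - P` is triangular for the
depth order) and `0` otherwise (the indicator of the vertices whose orbit avoids `B` lies in its
kernel).
Finally `p ↦ {{v, p v}}` is a bijection from the parent maps whose orbits reach `B` onto the
spanning forests rooted at `B`; its inverse sends a forest to the map taking each vertex to the
next one on its path to `B`.
-/

open Matrix BigOperators
open scoped Classical

/-- A spanning forest of `G` rooted at the vertex set `B`: a set of edges of `G` which is
acyclic and such that every connected component contains exactly one vertex of `B`. -/
def IsRootedSpanningForest {V : Type*} (G : SimpleGraph V) (B : Finset V)
    (F : Finset (Sym2 V)) : Prop :=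
  ↑F ⊆ G.edgeSet ∧ (SimpleGraph.fromEdgeSet (↑F : Set (Sym2 V))).IsAcyclic ∧
    ∀ v : V, ∃! b : V, b ∈ B ∧ (SimpleGraph.fromEdgeSet (↑F : Set (Sym2 V))).Reachable v b


section

open Function SimpleGraph

variable {V : Type*} {B : Finset V} {p : {v // v ∉ B} → V} {x : V}

noncomputable def extendParent (B : Finset V) (p : {v // v ∉ B} → V) (x : V) : V :=
  if hx : x ∈ B then x else p ⟨x, hx⟩

lemma extendParent_of_mem (hx : x ∈ B) : extendParent B p x = x := dif_pos hx

lemma extendParent_of_notMem (hx : x ∉ B) : extendParent B p x = p ⟨x, hx⟩ := dif_neg hx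

@[simp]
lemma extendParent_coe (v : {v // v ∉ B}) : extendParent B p v = p v := dif_neg v.2

lemma iterate_extendParent_of_mem (hx : x ∈ B) (k : ℕ) : (extendParent B p)^[k] x = x :=
  iterate_fixed (extendParent_of_mem hx) k

lemma iterate_extendParent_eq_of_le {k m : ℕ} (hk : (extendParent B p)^[k] x ∈ B)
    (hkm : k ≤ m) :
    (extendParent B p)^[m] x = (extendParent B p)^[k] x := by
  rw [← Nat.sub_add_cancel hkm, iterate_add_apply, iterate_extendParent_of_mem hk]

def IsRootedParentMap (B : Finset V) (p : {v // v ∉ B} → V) : Prop :=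
  ∀ x, ∃ k, (extendParent B p)^[k] x ∈ B

namespace IsRootedParentMap

variable (hp : IsRootedParentMap B p)
include hp

@[elab_as_elim]
lemma induction_on {P : V → Prop} (x : V) (mem : ∀ x ∈ B, P x)
    (notMem : ∀ x ∉ B, P (extendParent B p x) → P x) : P x := by
  obtain ⟨k, hk⟩ := hp x
  induction k generalizing x with
  | zero => exact mem x hk
  | succ k ih =>
    by_cases hx : x ∈ B
    · exact mem x hx
    · exact notMem x hx (ih _ (by rwa [← iterate_succ_apply]))

lemma iterate_succ_extendParent_ne (hx : x ∉ B) (k : ℕ) :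
    (extendParent B p)^[k + 1] x ≠ x := by
  intro hper
  obtain ⟨m, hm⟩ := hp x
  have hback : (extendParent B p)^[(k + 1) * m] x = x := (IsPeriodicPt.mul_const hper m).eq
  rw [iterate_extendParent_eq_of_le hm (Nat.le_mul_of_pos_left m k.succ_pos)] at hback
  exact hx (hback ▸ hm)

noncomputable def depth (x : V) : ℕ := Nat.find (hp x)

noncomputable def root (x : V) : V := (extendParent B p)^[hp.depth x] x

lemma root_mem (x : V) : hp.root x ∈ B := Nat.find_spec (hp x)

lemma root_of_mem (hx : x ∈ B) : hp.root x = x := iterate_extendParent_of_mem hx _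

lemma root_eq_iterate {m : ℕ} (hm : hp.depth x ≤ m) : hp.root x = (extendParent B p)^[m] x :=
  (iterate_extendParent_eq_of_le (hp.root_mem x) hm).symm

lemma root_extendParent (x : V) : hp.root (extendParent B p x) = hp.root x := by
  rw [hp.root_eq_iterate (Nat.le_add_left _ (hp.depth x)), ← iterate_succ_apply,
    hp.root_eq_iterate (m := (hp.depth x + _).succ) (by omega)]

lemma depth_extendParent_lt (hx : x ∉ B) : hp.depth (extendParent B p x) < hp.depth x := by
  have hpos : 0 < hp.depth x := (Nat.find_pos _).2 hx
  have : (extendParent B p)^[hp.depth x - 1] (extendParent B p x) ∈ B := by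
    rw [← iterate_succ_apply, Nat.succ_eq_add_one, Nat.sub_add_cancel hpos]
    exact hp.root_mem x
  exact (Nat.find_le this).trans_lt (Nat.sub_lt hpos one_pos)

lemma injective_parentEdge : Injective fun v : {v // v ∉ B} => s((v : V), p v) := by
  intro v w h
  rcases Sym2.eq_iff.1 h with ⟨hvw, -⟩ | ⟨hvw, hwv⟩
  · exact Subtype.ext hvw
  · refine absurd ?_ (hp.iterate_succ_extendParent_ne v.2 1)
    change extendParent B p (extendParent B p v) = v
    rw [extendParent_coe, hwv, extendParent_coe]
    exact hvw.symm

end IsRootedParentMap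

section ParentMatrix

variable (R : Type*) [CommRing R]

noncomputable def parentMatrix [DecidableEq V] (p : {v // v ∉ B} → V) :
    Matrix {v // v ∉ B} {v // v ∉ B} R :=
  of fun v w => if (w : V) = p v then 1 else 0

variable {R}

lemma det_one_sub_parentMatrix_of_isRootedParentMap [Fintype V] [DecidableEq V]
    (hp : IsRootedParentMap B p) : det (1 - parentMatrix R p) = 1 := by
  set d : {v // v ∉ B} → ℕ := fun v => hp.depth v
  have hzero : ∀ v w, d v ≤ d w → parentMatrix R p v w = 0 := by
    intro v w hvw
    have hlt := hp.depth_extendParent_lt v.2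
    rw [extendParent_coe] at hlt
    simp only [parentMatrix, of_apply, ite_eq_right_iff]
    intro h
    simp only [d, h] at hvw
    omega
  have htri : (1 - parentMatrix R p).BlockTriangular (OrderDual.toDual ∘ d) := fun v w hwv => by
    rw [Matrix.sub_apply, one_apply_ne (ne_of_apply_ne d hwv.ne'), hzero v w hwv.le, sub_zero]
  rw [htri.det]
  refine Finset.prod_eq_one fun k _ => ?_
  have hblock : (1 - parentMatrix R p).toSquareBlock (OrderDual.toDual ∘ d) k = 1 := by
    ext ⟨v, hv⟩ ⟨w, hw⟩
    have hvw : d v = d w := OrderDual.toDual.injective (hv.trans hw.symm)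
    simp [toSquareBlock_def, one_apply, hzero v w hvw.le]
  rw [hblock, det_one]

lemma det_one_sub_parentMatrix_of_not_isRootedParentMap [Fintype V] [DecidableEq V] [IsDomain R]
    (hp : ¬ IsRootedParentMap B p) : det (1 - parentMatrix R p) = 0 := by
  set S := {x | ∀ k, (extendParent B p)^[k] x ∉ B}
  obtain ⟨x, hx⟩ : ∃ x, x ∈ S := by simpa [IsRootedParentMap, S] using hp
  have hS : ∀ v : {v // v ∉ B}, (v : V) ∈ S ↔ p v ∈ S := by
    intro v
    rw [← extendParent_coe (p := p) v]
    refine ⟨fun h k => by simpa only [← iterate_succ_apply] using h (k + 1), fun h k => ?_⟩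
    cases k with
    | zero => exact v.2
    | succ k => simpa only [iterate_succ_apply] using h k
  rw [← exists_mulVec_eq_zero_iff]
  refine ⟨fun v => if (v : V) ∈ S then 1 else 0,
    Function.ne_iff.2 ⟨⟨x, hx 0⟩, by simp [hx]⟩, ?_⟩
  ext v
  have hrow : (parentMatrix R p *ᵥ fun v => if (v : V) ∈ S then 1 else 0) v
      = if p v ∈ S then 1 else 0 := by
    by_cases hpv : p v ∈ S
    · rw [mulVec, dotProduct, Finset.sum_eq_single ⟨p v, hpv 0⟩]
      · simp [parentMatrix, hpv]
      · intro w _ hw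
        simp [parentMatrix, show (w : V) ≠ p v from fun h => hw (Subtype.ext h)]
      · simp
    · refine (Finset.sum_eq_zero fun w _ => ?_).trans (if_neg hpv).symm
      by_cases hw : (w : V) = p v <;> simp_all [parentMatrix]
  simp [sub_mulVec, hrow, hS v]

end ParentMatrix

lemma Matrix.det_of_sum_rows {n ι R : Type*} [Fintype n] [DecidableEq n] [Fintype ι] [CommRing R]
    (x : n → ι → n → R) :
    (of fun i j => ∑ k, x i k j).det = ∑ r : n → ι, (of fun i => x i (r i)).det := by
  have hrows : (of fun i j => ∑ k, x i k j) = fun i => ∑ k, x i k := by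
    ext i j
    simp [Finset.sum_apply]
  rw [hrows]
  exact (detRowAlternating : (n → R) [⋀^n]→ₗ[R] R).toMultilinearMap.map_sum x

lemma glap_apply_eq_sum [Fintype V] [DecidableEq V] (G : SimpleGraph V) (c : Sym2 V → ℝ)
    (v w : V) :
    glap G c v w = ∑ u, (if G.Adj v u then c s(v, u) else 0) *
      ((if v = w then 1 else 0) - if w = u then 1 else 0) := by
  simp only [mul_sub, Finset.sum_sub_distrib, mul_ite, mul_one, mul_zero, Finset.sum_ite_eq,
    Finset.mem_univ, if_true]
  by_cases hvw : v = w
  · subst hvw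
    simp [glap]
  · by_cases hadj : G.Adj v w <;> simp [glap, hvw, hadj]

lemma det_submatrix_glap_eq_sum [Fintype V] [DecidableEq V] (G : SimpleGraph V)
    (c : Sym2 V → ℝ) (B : Finset V) :
    ((glap G c).submatrix (fun i : {v // v ∉ B} => (i : V))
        (fun j : {v // v ∉ B} => (j : V))).det =
      ∑ p : {v // v ∉ B} → V,
        (∏ v : {v // v ∉ B}, if G.Adj v (p v) then c s(v, p v) else 0) *
          det (1 - parentMatrix ℝ p) := by
  have hrows :
      (glap G c).submatrix (fun i : {v // v ∉ B} => (i : V)) (fun j : {v // v ∉ B} => (j : V)) =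
      of fun v w : {v // v ∉ B} => ∑ u, (if G.Adj v u then c s(v, u) else 0) *
        ((1 : Matrix {v // v ∉ B} {v // v ∉ B} ℝ) v w - if (w : V) = u then 1 else 0) := by
    ext v w
    simp [glap_apply_eq_sum, one_apply, Subtype.ext_iff]
  rw [hrows, det_of_sum_rows]
  refine Finset.sum_congr rfl fun p _ => ?_
  rw [← det_mul_column]
  rfl

lemma SimpleGraph.Reachable.mem_of_adj_closed {G : SimpleGraph V} {S : Set V}
    (hS : ∀ ⦃x y⦄, G.Adj x y → x ∈ S → y ∈ S) {x y : V} (h : G.Reachable x y)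
    (hx : x ∈ S) : y ∈ S := by
  obtain ⟨w⟩ := h
  induction w with
  | nil => exact hx
  | cons hadj _ ih => exact ih (hS hadj hx)

section ParentGraph

variable [Fintype V] [DecidableEq V]

noncomputable def parentEdges (p : {v // v ∉ B} → V) : Finset (Sym2 V) :=
  Finset.univ.image fun v : {v // v ∉ B} => s((v : V), p v)

lemma mem_parentEdges (v : {v // v ∉ B}) : s((v : V), p v) ∈ parentEdges p :=
  Finset.mem_image_of_mem _ (Finset.mem_univ v)

noncomputable abbrev parentGraph (p : {v // v ∉ B} → V) : SimpleGraph V :=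
  fromEdgeSet ↑(parentEdges p)

lemma parentGraph_adj_extendParent (hne : ∀ v : {v // v ∉ B}, (v : V) ≠ p v) (hx : x ∉ B) :
    (parentGraph p).Adj x (extendParent B p x) := by
  rw [extendParent_of_notMem hx, fromEdgeSet_adj]
  exact ⟨mem_parentEdges ⟨x, hx⟩, hne ⟨x, hx⟩⟩

lemma parentGraph_adj_cases {y : V} (h : (parentGraph p).Adj x y) :
    (x ∉ B ∧ y = extendParent B p x) ∨ (y ∉ B ∧ x = extendParent B p y) := by
  obtain ⟨hmem, -⟩ := (fromEdgeSet_adj _).1 h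
  obtain ⟨v, -, hv⟩ := Finset.mem_image.1 hmem
  rcases Sym2.eq_iff.1 hv with ⟨rfl, rfl⟩ | ⟨rfl, rfl⟩
  · exact .inl ⟨v.2, (extendParent_coe v).symm⟩
  · exact .inr ⟨v.2, (extendParent_coe v).symm⟩

namespace IsRootedParentMap

variable (hp : IsRootedParentMap B p)
include hp

lemma reachable_root (hne : ∀ v : {v // v ∉ B}, (v : V) ≠ p v) (x : V) :
    (parentGraph p).Reachable x (hp.root x) := by
  refine hp.induction_on x (fun x hx => ?_) (fun x hx ih => ?_)
  · rw [hp.root_of_mem hx]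
  · rw [← hp.root_extendParent]
    exact (parentGraph_adj_extendParent hne hx).reachable.trans ih

lemma root_eq_of_reachable {y : V} (h : (parentGraph p).Reachable x y) : hp.root y = hp.root x :=
  h.mem_of_adj_closed (S := {y | hp.root y = hp.root x}) (fun y z hyz hy => by
    rcases parentGraph_adj_cases hyz with ⟨-, rfl⟩ | ⟨-, rfl⟩
    · exact (hp.root_extendParent y).trans hy
    · exact (hp.root_extendParent z).symm.trans hy) rfl

/-- Whatever `x` reaches without the edge to its parent has `x` on its forward orbit. -/
lemma not_reachable_deleteEdges (hx : x ∉ B) :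
    ¬ ((parentGraph p).deleteEdges {s(x, extendParent B p x)}).Reachable x
      (extendParent B p x) := by
  intro h
  have hclosed := h.mem_of_adj_closed (S := {y | ∃ k, (extendParent B p)^[k] y = x})
    (fun y z hyz ⟨k, hk⟩ => by
      obtain ⟨hyz, hne⟩ := deleteEdges_adj.1 hyz
      rcases parentGraph_adj_cases hyz with ⟨-, rfl⟩ | ⟨-, rfl⟩
      · cases k with
        | zero => exact absurd (by rw [← hk]; rfl) hne
        | succ k => exact ⟨k, by rwa [← iterate_succ_apply]⟩
      · exact ⟨k + 1, by rwa [iterate_succ_apply]⟩) ⟨0, rfl⟩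
  obtain ⟨k, hk⟩ := hclosed
  exact hp.iterate_succ_extendParent_ne hx k (by rwa [iterate_succ_apply])

lemma isAcyclic_parentGraph : (parentGraph p).IsAcyclic := by
  refine isAcyclic_iff_forall_adj_isBridge.2 fun x y hxy => ?_
  rcases parentGraph_adj_cases hxy with ⟨hx, rfl⟩ | ⟨hy, rfl⟩
  · exact isBridge_iff.2 (hp.not_reachable_deleteEdges hx)
  · rw [Sym2.eq_swap]
    exact isBridge_iff.2 (hp.not_reachable_deleteEdges hy)

lemma existsUnique_reachable_mem (hne : ∀ v : {v // v ∉ B}, (v : V) ≠ p v) (x : V) :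
    ∃! b, b ∈ B ∧ (parentGraph p).Reachable x b :=
  ⟨hp.root x, ⟨hp.root_mem x, hp.reachable_root hne x⟩,
    fun _ ⟨hb, hxb⟩ => ((hp.root_eq_of_reachable hxb).symm.trans (hp.root_of_mem hb)).symm⟩

lemma isRootedSpanningForest_parentEdges {G : SimpleGraph V}
    (hadj : ∀ v : {v // v ∉ B}, G.Adj v (p v)) :
    IsRootedSpanningForest G B (parentEdges p) := by
  refine ⟨?_, hp.isAcyclic_parentGraph, hp.existsUnique_reachable_mem fun v => (hadj v).ne⟩
  rintro e he
  obtain ⟨v, -, rfl⟩ := Finset.mem_image.1 he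
  exact hadj v

end IsRootedParentMap

end ParentGraph

lemma SimpleGraph.IsAcyclic.snd_eq_snd {H : SimpleGraph V} (hH : H.IsAcyclic) {x b b' : V}
    (hb : b = b') {q : H.Walk x b} {q' : H.Walk x b'} (hq : q.IsPath) (hq' : q'.IsPath) :
    q.snd = q'.snd := by
  subst hb
  obtain rfl : q = q' :=
    congrArg Subtype.val ((hH.subsingleton_path x b).elim ⟨q, hq⟩ ⟨q', hq'⟩)
  rfl

section ForestParent

variable {H : SimpleGraph V}

/-- The neighbour of `x` on a path from `x` to `B`; it does not depend on the path when `H` is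
acyclic and `x` reaches a single vertex of `B`. -/
noncomputable def forestParent (H : SimpleGraph V) (B : Finset V) (x : V) : V :=
  if h : ∃ b ∈ B, H.Reachable x b then (h.choose_spec.2.some.toPath : H.Walk x h.choose).snd
  else x

lemma forestParent_eq_snd (hH : H.IsAcyclic) (hroot : ∃! b, b ∈ B ∧ H.Reachable x b) {b : V}
    (hb : b ∈ B) {q : H.Walk x b} (hq : q.IsPath) : forestParent H B x = q.snd := by
  have h : ∃ b ∈ B, H.Reachable x b := ⟨b, hb, q.reachable⟩
  rw [forestParent, dif_pos h]
  exact hH.snd_eq_snd (hroot.unique h.choose_spec ⟨hb, q.reachable⟩)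
    (h.choose_spec.2.some.toPath).2 hq

lemma exists_isPath_forestParent_eq_snd (hH : H.IsAcyclic)
    (hroot : ∃! b, b ∈ B ∧ H.Reachable x b) :
    ∃ b ∈ B, ∃ q : H.Walk x b, q.IsPath ∧ forestParent H B x = q.snd := by
  classical
  obtain ⟨b, ⟨hb, ⟨q⟩⟩, -⟩ := id hroot
  exact ⟨b, hb, q.bypass, q.bypass_isPath, forestParent_eq_snd hH hroot hb q.bypass_isPath⟩

lemma adj_forestParent (hH : H.IsAcyclic) (hroot : ∃! b, b ∈ B ∧ H.Reachable x b)
    (hx : x ∉ B) : H.Adj x (forestParent H B x) := by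
  obtain ⟨b, hb, q, -, hq⟩ := exists_isPath_forestParent_eq_snd hH hroot
  rw [hq]
  exact q.adj_snd (Walk.not_nil_of_ne fun h => hx (h ▸ hb))

lemma isRootedParentMap_forestParent (hH : H.IsAcyclic)
    (hroot : ∀ x, ∃! b, b ∈ B ∧ H.Reachable x b) :
    IsRootedParentMap B fun v => forestParent H B v := by
  intro x
  obtain ⟨b, hb, q, hq, -⟩ := exists_isPath_forestParent_eq_snd hH (hroot x)
  induction q with
  | nil => exact ⟨0, hb⟩
  | @cons y z _ hadj q ih =>
    by_cases hy : y ∈ B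
    · exact ⟨0, hy⟩
    obtain ⟨k, hk⟩ := ih hb hq.of_cons
    refine ⟨k + 1, ?_⟩
    rwa [iterate_succ_apply, extendParent_of_notMem hy, forestParent_eq_snd hH (hroot y) hb hq,
      Walk.snd_cons]

end ForestParent

namespace IsRootedSpanningForest

variable {G : SimpleGraph V} {F : Finset (Sym2 V)} (hF : IsRootedSpanningForest G B F)
include hF

lemma adj_forestParent (v : {v // v ∉ B}) : G.Adj v (forestParent (fromEdgeSet ↑F) B v) :=
  hF.1 ((fromEdgeSet_adj _).1 (_root_.adj_forestParent hF.2.1 (hF.2.2 v) v.2)).1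

lemma parentEdges_forestParent [Fintype V] [DecidableEq V] :
    parentEdges (fun v : {v // v ∉ B} => forestParent (fromEdgeSet ↑F) B v) = F := by
  obtain ⟨hFG, hH, hroot⟩ := hF
  refine Finset.Subset.antisymm (fun e he => ?_) (fun e he => ?_)
  · obtain ⟨v, -, rfl⟩ := Finset.mem_image.1 he
    exact ((fromEdgeSet_adj _).1 (_root_.adj_forestParent hH (hroot v) v.2)).1
  induction e using Sym2.ind with | _ x y => ?_
  have hxy : (fromEdgeSet (↑F : Set (Sym2 V))).Adj x y :=
    (fromEdgeSet_adj _).2 ⟨he, (hFG he).ne⟩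
  obtain ⟨b, hb, q, hq, hpar⟩ := exists_isPath_forestParent_eq_snd hH (hroot x)
  by_cases hy : y ∈ q.support
  · have hx : x ∉ B := by
      intro hx
      obtain rfl := (hroot x).unique ⟨hb, q.reachable⟩ ⟨hx, .refl x⟩
      rw [Walk.nil_iff_support_eq.1 (Walk.isPath_iff_nil.1 hq), List.mem_singleton] at hy
      exact hxy.ne hy.symm
    rw [← hH.eq_snd_of_adj_start hq hxy hy] at hpar
    exact hpar ▸ mem_parentEdges (p := fun v : {v // v ∉ B} => forestParent _ B v) ⟨x, hx⟩
  · have hq' : (Walk.cons hxy.symm q).IsPath := hq.cons hy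
    have hyB : y ∉ B := fun hyB => hy <| (hroot y).unique
      ⟨hb, (Walk.cons hxy.symm q).reachable⟩ ⟨hyB, .refl y⟩ ▸ q.end_mem_support
    have hpar' := forestParent_eq_snd hH (hroot y) hb hq'
    rw [Walk.snd_cons] at hpar'
    rw [Sym2.eq_swap]
    exact hpar' ▸ mem_parentEdges (p := fun v : {v // v ∉ B} => forestParent _ B v) ⟨y, hyB⟩

end IsRootedSpanningForest

namespace IsRootedParentMap

variable [Fintype V] [DecidableEq V] (hp : IsRootedParentMap B p)
  (hne : ∀ v : {v // v ∉ B}, (v : V) ≠ p v)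
include hp hne

lemma exists_isPath_snd_eq_extendParent (x : V) :
    ∃ b ∈ B, ∃ q : (parentGraph p).Walk x b, q.IsPath ∧
      (∀ z ∈ q.support, ∃ k, (extendParent B p)^[k] x = z) ∧
      (x ∉ B → q.snd = extendParent B p x) := by
  refine hp.induction_on x (fun x hx => ⟨x, hx, .nil, .nil,
    fun z hz => ⟨0, (Walk.mem_support_nil_iff.1 hz).symm⟩, (absurd hx ·)⟩) ?_
  rintro x hx ⟨b, hb, q, hq, hsupp, -⟩
  have hxq : x ∉ q.support := fun hxq => by
    obtain ⟨k, hk⟩ := hsupp x hxq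
    exact hp.iterate_succ_extendParent_ne hx k (by rwa [iterate_succ_apply])
  refine ⟨b, hb, .cons (parentGraph_adj_extendParent hne hx) q, hq.cons hxq, ?_,
    fun _ => Walk.snd_cons _ _⟩
  intro z hz
  rcases List.mem_cons.1 (Walk.support_cons _ _ ▸ hz) with rfl | hz
  · exact ⟨0, rfl⟩
  · obtain ⟨k, rfl⟩ := hsupp z hz
    exact ⟨k + 1, iterate_succ_apply _ _ _⟩

lemma forestParent_parentGraph (v : {v // v ∉ B}) : forestParent (parentGraph p) B v = p v := by
  obtain ⟨b, hb, q, hq, -, hsnd⟩ := hp.exists_isPath_snd_eq_extendParent hne v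
  rw [forestParent_eq_snd hp.isAcyclic_parentGraph (hp.existsUnique_reachable_mem hne v) hb hq,
    hsnd v.2, extendParent_coe]

end IsRootedParentMap

theorem sum_prod_parentMaps_eq_sum_prod_rootedForests {R : Type*} [CommSemiring R] [Fintype V]
    [DecidableEq V] (G : SimpleGraph V) (B : Finset V) (w : Sym2 V → R) :
    ∑ p ∈ Finset.univ.filter
        fun p : {v // v ∉ B} → V =>
          IsRootedParentMap B p ∧ ∀ v : {v // v ∉ B}, G.Adj v (p v),
      ∏ v : {v // v ∉ B}, w s((v : V), p v) =
    ∑ F ∈ Finset.univ.filter (IsRootedSpanningForest G B), ∏ e ∈ F, w e := by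
  refine Finset.sum_nbij' parentEdges (fun F v => forestParent (fromEdgeSet ↑F) B v)
    (fun p hp => ?_) (fun F hF => ?_) (fun p hp => ?_) (fun F hF => ?_) (fun p hp => ?_)
  all_goals simp only [Finset.mem_filter, Finset.mem_univ, true_and] at *
  · exact hp.1.isRootedSpanningForest_parentEdges hp.2
  · exact ⟨isRootedParentMap_forestParent hF.2.1 hF.2.2, hF.adj_forestParent⟩
  · exact funext (hp.1.forestParent_parentGraph fun v => (hp.2 v).ne)
  · exact hF.parentEdges_forestParent
  · rw [parentEdges, Finset.prod_image hp.1.injective_parentEdge.injOn]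

end

theorem dirichlet_det_eq_rooted_forests_general {V : Type*} [Fintype V] [DecidableEq V]
    (G : SimpleGraph V) (c : Sym2 V → ℝ)
    (B : Finset V) :
    ((glap G c).submatrix (fun i : {v : V // v ∉ B} => (i : V))
        (fun j : {v : V // v ∉ B} => (j : V))).det
    = ∑ F ∈ Finset.univ.filter (fun F : Finset (Sym2 V) => IsRootedSpanningForest G B F),
        ∏ e ∈ F, c e := by
  rw [det_submatrix_glap_eq_sum, ← sum_prod_parentMaps_eq_sum_prod_rootedForests,
    Finset.sum_filter]
  refine Finset.sum_congr rfl fun p _ => ?_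
  by_cases hp : IsRootedParentMap B p
  · rw [det_one_sub_parentMatrix_of_isRootedParentMap hp, mul_one, Finset.prod_ite_zero]
    simp [hp]
  · rw [det_one_sub_parentMatrix_of_not_isRootedParentMap hp, mul_zero, if_neg (hp ·.1)]

/-- Rooted spanning forest theorem: the determinant of the Dirichlet Laplacian with
boundary `B` equals the weighted sum over spanning forests each of whose components
contains exactly one vertex of `B`. -/
theorem dirichlet_det_eq_rooted_forests {V : Type*} [Fintype V] [DecidableEq V] [Nonempty V]
    (G : SimpleGraph V) (c : Sym2 V → ℝ)
    (hpos : ∀ e ∈ G.edgeSet, 0 < c e) (hconn : G.Connected)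
    (B : Finset V) (hB : B.Nonempty) :
    ((glap G c).submatrix (fun i : {v : V // v ∉ B} => (i : V))
        (fun j : {v : V // v ∉ B} => (j : V))).det
    = ∑ F ∈ Finset.univ.filter (fun F : Finset (Sym2 V) => IsRootedSpanningForest G B F),
        ∏ e ∈ F, c e :=
  dirichlet_det_eq_rooted_forests_general G c B
end

section
/- Maximum principle: Let (G,c) be a network, B ⊆ V a nonempty set of boundary vertices, and f : V → ℝ a function with (Δf)(v) = 0 for every v ∈ V∖B. Then the maximum of f over V is attained at a vertex of B, i.e. max_{v∈V} f(v) = max_{v∈B} f(v). -/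
/-!
Harmonicity at `v` says that `f v` is a `c`-weighted average of its neighbours' values,
so at an interior maximum every neighbour attains the maximum as well. Following a walk
from a maximiser to `B`, the maximum propagates until it reaches a vertex of `B`.
-/

open Matrix BigOperators

/-- The Laplacian of a network given by a symmetric conductance function `c`
(zero on the diagonal and on non-edges): `Δ v v' = -c v v'` off the diagonal
and `Δ v v = ∑_{v'} c v v'` on the diagonal. -/
noncomputable def netLap {V : Type*} [Fintype V] [DecidableEq V] (c : V → V → ℝ) :
    Matrix V V ℝ :=
  Matrix.of fun v w => if v = w then ∑ u, c v u else -c v w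

theorem SimpleGraph.Walk.exists_mem_of_propagates_outside {V : Type*} {G : SimpleGraph V}
    {P : V → Prop} {s : Set V} (hP : ∀ x y, x ∉ s → G.Adj x y → P x → P y)
    {u v : V} (p : G.Walk u v) (hu : P u) (hv : v ∈ s) : ∃ w ∈ s, P w := by
  induction p with
  | nil => exact ⟨_, hv, hu⟩
  | @cons x _ _ hxy _ ih =>
    by_cases hxs : x ∈ s
    · exact ⟨x, hxs, hu⟩
    · exact ih (hP _ _ hxs hxy hu) hv

section Network

variable {V : Type*} [Fintype V] [DecidableEq V] {c : V → V → ℝ}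

theorem netLap_mulVec_apply (f : V → ℝ) {v : V} (hv : c v v = 0) :
    (netLap c *ᵥ f) v = ∑ u, c v u * (f v - f u) := by
  have hentry : ∀ u, netLap c v u = (if v = u then ∑ x, c v x else 0) - c v u := by
    intro u
    by_cases h : v = u
    · subst h; simp [netLap, hv]
    · simp [netLap, h]
  simp only [mulVec, dotProduct, hentry, sub_mul, Finset.sum_sub_distrib, ite_mul, zero_mul,
    Finset.sum_ite_eq, Finset.mem_univ, if_true, mul_sub, Finset.sum_mul]

theorem apply_eq_of_netLap_mulVec_eq_zero_of_forall_le {f : V → ℝ} {v w : V}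
    (hnonneg : ∀ u, 0 ≤ c v u) (hv : c v v = 0) (hharm : (netLap c *ᵥ f) v = 0)
    (hmax : ∀ u, f u ≤ f v) (hw : c v w ≠ 0) : f w = f v := by
  have hterm : ∀ u ∈ Finset.univ, 0 ≤ c v u * (f v - f u) :=
    fun u _ => mul_nonneg (hnonneg u) (sub_nonneg.2 (hmax u))
  rw [netLap_mulVec_apply f hv] at hharm
  have hw0 := (Finset.sum_eq_zero_iff_of_nonneg hterm).1 hharm w (Finset.mem_univ w)
  linarith [(mul_eq_zero.1 hw0).resolve_left hw]

end Network

/-- Maximum principle: a function harmonic off a nonempty boundary set `B` attains its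
maximum on `B`. -/
theorem maximum_principle {V : Type*} [Fintype V] [DecidableEq V] [Nonempty V]
    (c : V → V → ℝ)
    (hsymm : ∀ v w, c v w = c w v)
    (hnonneg : ∀ v w, 0 ≤ c v w)
    (hdiag : ∀ v, c v v = 0)
    (hconn : (SimpleGraph.fromRel fun v w : V => c v w ≠ 0).Connected)
    (B : Finset V) (hB : B.Nonempty)
    (f : V → ℝ) (hf : ∀ v, v ∉ B → ((netLap c) *ᵥ f) v = 0) :
    Finset.univ.sup' Finset.univ_nonempty f = B.sup' hB f := by
  set M := Finset.univ.sup' Finset.univ_nonempty f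
  refine le_antisymm ?_ (Finset.sup'_mono f (Finset.subset_univ B) hB)
  have hmax : ∀ u, f u ≤ M := fun u => Finset.le_sup' f (Finset.mem_univ u)
  have hpropagate : ∀ x y, x ∉ (B : Set V) →
      (SimpleGraph.fromRel fun v w : V => c v w ≠ 0).Adj x y → f x = M → f y = M := by
    rintro x y hx ⟨-, hxy⟩ hfx
    have hcxy : c x y ≠ 0 := hxy.elim id (hsymm x y ▸ ·)
    rw [← hfx] at hmax ⊢
    exact apply_eq_of_netLap_mulVec_eq_zero_of_forall_le (hnonneg x) (hdiag x) (hf x hx) hmax hcxy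
  obtain ⟨v₀, -, hv₀⟩ := Finset.exists_mem_eq_sup' Finset.univ_nonempty f
  obtain ⟨b, hb⟩ := hB
  obtain ⟨p⟩ := hconn.preconnected v₀ b
  obtain ⟨w, hwB, hwM⟩ := p.exists_mem_of_propagates_outside hpropagate hv₀.symm hb
  exact hwM ▸ Finset.le_sup' f hwB
end

section
/- Schur complement minor identity: Let N and I be finite linearly ordered index sets and let Δ be the real block matrix [[A,B],[B',C]] with A of size N×N, B of size N×I, B' of size I×N, and C of size I×I invertible. Set L = −A + B C⁻¹ B'. Then for any subsets X, Y ⊆ N with |X| = |Y|, listing X and Y in increasing order followed by all of I, the determinant of the submatrix of Δ with rows indexed by X∪I and columns indexed by Y∪I equals (−1)^{|X|} · det(L_X^Y) · det C, where L_X^Y is the submatrix of L with rows X and columns Y. -/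
open Matrix

namespace Matrix

variable {l m n o p q α : Type*}

theorem fromBlocks_submatrix_sum_elim_inl_inr (A : Matrix n l α) (B : Matrix n m α)
    (C : Matrix o l α) (D : Matrix o m α) (f : p → n) (g : q → l) :
    (fromBlocks A B C D).submatrix (Sum.elim (fun i => Sum.inl (f i)) Sum.inr)
        (Sum.elim (fun j => Sum.inl (g j)) Sum.inr) =
      fromBlocks (A.submatrix f g) (B.submatrix f id) (C.submatrix id g) D := by
  ext (i | i) (j | j) <;> rfl

theorem submatrix_sub_mul_mul [Fintype m] [Fintype o] [NonUnitalNonAssocRing α] (A : Matrix n l α)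
    (B : Matrix n m α) (D : Matrix m o α) (C : Matrix o l α) (f : p → n) (g : q → l) :
    (A - B * D * C).submatrix f g =
      A.submatrix f g - B.submatrix f id * D * C.submatrix id g := by
  rw [submatrix_sub, Pi.sub_apply, Pi.sub_apply, submatrix_mul _ _ _ id _ Function.bijective_id,
    submatrix_mul _ _ _ id _ Function.bijective_id, submatrix_id_id]

end Matrix

/-- Schur complement minor identity: for a block matrix `Δ = [[A,B],[B',C]]` with `C`
invertible and `L = -A + B C⁻¹ B'`, the determinant of the submatrix of `Δ` with rows
`X ∪ I` and columns `Y ∪ I` (with `X, Y ⊆ N` of equal cardinality `k`, listed in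
increasing order followed by all of `I`) equals `(-1)^k · det(L_X^Y) · det C`. -/
theorem schur_complement_minor {N I : Type*} [Fintype N] [LinearOrder N]
    [Fintype I] [DecidableEq I]
    (A : Matrix N N ℝ) (B : Matrix N I ℝ) (B' : Matrix I N ℝ) (C : Matrix I I ℝ)
    (hC : IsUnit C.det)
    (X Y : Finset N) (k : ℕ) (hX : X.card = k) (hY : Y.card = k) :
    ((Matrix.fromBlocks A B B' C).submatrix
        (Sum.elim (fun i : Fin k => Sum.inl (X.orderEmbOfFin hX i))
          (Sum.inr : I → N ⊕ I))
        (Sum.elim (fun j : Fin k => Sum.inl (Y.orderEmbOfFin hY j))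
          (Sum.inr : I → N ⊕ I))).det
    = (-1 : ℝ) ^ k *
        ((-A + B * C⁻¹ * B').submatrix (X.orderEmbOfFin hX) (Y.orderEmbOfFin hY)).det *
        C.det := by
  have := invertibleOfIsUnitDet C hC
  rw [fromBlocks_submatrix_sum_elim_inl_inr, det_fromBlocks₂₂, invOf_eq_nonsing_inv,
    ← submatrix_sub_mul_mul]
  -- `L = -(A - B C⁻¹ B')`, and the two factors `(-1) ^ k` cancel
  rw [neg_add_eq_sub, ← neg_sub A, submatrix_neg, Pi.neg_apply, Pi.neg_apply, det_neg,
    Fintype.card_fin, ← mul_assoc, ← mul_pow, neg_one_mul, neg_neg, one_pow, one_mul, mul_comm]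
end

section
/- Generalized Dodgson condensation (Desnanot–Jacobi) identity: Let M be an n×n matrix over a commutative ring, n ≥ 2, let a < b be row indices and c < d column indices. Writing M^{≠i₁,…}_{≠j₁,…} for the submatrix obtained by deleting the listed rows and columns (remaining indices kept in order), one has det(M^{≠a}_{≠c}) · det(M^{≠b}_{≠d}) = det(M) · det(M^{≠a,b}_{≠c,d}) + det(M^{≠b}_{≠c}) · det(M^{≠a}_{≠d}). -/
/-!
Let `B` be the identity matrix with its columns `c, d` replaced by the columns `a, b` of
`adj M`. Then `M * B` is `M` with those columns replaced by `(det M) • e_a` and `(det M) • e_b`,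
so `det M * det B = (det M)^2 * det((M.updateCol c e_a).updateCol d e_b)`, where `det B` is the
`2 × 2` minor of `adj M` in rows `c, d` and columns `a, b`. For the generic matrix over
`ℤ[X_ij]` the factor `det M` is a nonzero element of a domain and cancels; specialising gives
Jacobi's identity for the `2 × 2` minors of the adjugate over any commutative ring. Laplace
expansion along the replaced columns turns its entries into the minors of the statement.
-/

namespace Matrix

theorem submatrix_updateCol_of_injective {α l m o p : Type*} [DecidableEq m] [DecidableEq p]
    (A : Matrix l m α) {g : p → m} (hg : g.Injective) (f : o → l) (j : p) (v : l → α) :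
    (A.updateCol (g j) v).submatrix f g = (A.submatrix f g).updateCol j (v ∘ f) := by
  ext r s
  simp [updateCol_apply, hg.eq_iff]

section Adjugate

variable {n R : Type*} [Fintype n] [DecidableEq n] [CommRing R]

theorem det_updateCol_single_one (A : Matrix n n R) (i j : n) :
    (A.updateCol j (Pi.single i 1)).det = A.adjugate j i := by
  rw [← cramer_apply, cramer_eq_adjugate_mulVec, mulVec_single_one]
  rfl

/-- The matrix is `1 + U * V` with `U : n × 2` and `V : 2 × n`, and
`det (1 + U * V) = det (1 + V * U)` is a `2 × 2` determinant. -/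
theorem det_one_updateCol_updateCol {c d : n} (hcd : c ≠ d) (u v : n → R) :
    (((1 : Matrix n n R).updateCol c u).updateCol d v).det = u c * v d - u d * v c := by
  let U : Matrix n (Fin 2) R :=
    of fun i => ![u i - (Pi.single c 1 : n → R) i, v i - (Pi.single d 1 : n → R) i]
  let V : Matrix (Fin 2) n R := of ![(Pi.single c 1 : n → R), Pi.single d 1]
  have hUV : ((1 : Matrix n n R).updateCol c u).updateCol d v = 1 + U * V := by
    ext i j
    simp only [updateCol_apply, U, V, add_apply, mul_apply, Fin.sum_univ_two, Pi.single_apply,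
      one_apply, of_apply]
    split_ifs <;> simp_all
  rw [hUV, det_one_add_mul_comm, det_fin_two]
  simp [U, V, Pi.single_apply, hcd, hcd.symm]
  ring

theorem det_mul_adjugate_mul_adjugate_sub_adjugate_mul_adjugate (M : Matrix n n R) {c d : n}
    (hcd : c ≠ d) (a b : n) :
    M.det * (M.adjugate c a * M.adjugate d b - M.adjugate d a * M.adjugate c b) =
      M.det * (M.det * ((M.updateCol c (Pi.single a 1)).updateCol d (Pi.single b 1)).det) := by
  let B := ((1 : Matrix n n R).updateCol c (M.cramer (Pi.single a 1))).updateCol d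
    (M.cramer (Pi.single b 1))
  have hB : B.det = M.adjugate c a * M.adjugate d b - M.adjugate d a * M.adjugate c b := by
    simp only [B, det_one_updateCol_updateCol hcd, cramer_apply, det_updateCol_single_one]
  have hMB : M * B =
      (M.updateCol c (M.det • Pi.single a 1)).updateCol d (M.det • Pi.single b 1) := by
    simp only [B, mul_updateCol, mul_one, mulVec_cramer]
  rw [← hB, ← det_mul, hMB, det_updateCol_smul, updateCol_comm _ hcd, det_updateCol_smul,
    updateCol_comm _ hcd.symm]

theorem adjugate_mul_adjugate_sub_adjugate_mul_adjugate (M : Matrix n n R) {c d : n}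
    (hcd : c ≠ d) (a b : n) :
    M.adjugate c a * M.adjugate d b - M.adjugate d a * M.adjugate c b =
      M.det * ((M.updateCol c (Pi.single a 1)).updateCol d (Pi.single b 1)).det := by
  let X := mvPolynomialX n n ℤ
  have hX := mul_left_cancel₀ (det_mvPolynomialX_ne_zero n ℤ)
    (det_mul_adjugate_mul_adjugate_sub_adjugate_mul_adjugate X hcd a b)
  let φ := MvPolynomial.aeval (R := ℤ) fun p : n × n => M p.1 p.2
  have hφX : φ.mapMatrix X = M := mvPolynomialX_mapMatrix_aeval ℤ M
  have hadj : ∀ i j, φ (X.adjugate i j) = M.adjugate i j := fun i j => by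
    rw [← hφX, ← AlgHom.map_adjugate]
    rfl
  have hupd : ∀ (A : Matrix n n _) (j i : n), φ.mapMatrix (A.updateCol j (Pi.single i 1)) =
      (φ.mapMatrix A).updateCol j (Pi.single i 1) := by
    intro A j i
    rw [AlgHom.mapMatrix_apply, map_updateCol]
    congr 1
    ext k
    simp [Pi.apply_single (fun _ => φ) (fun _ => map_zero φ)]
  simpa only [map_sub, map_mul, hadj, AlgHom.map_det, hupd, hφX] using congrArg φ hX

end Adjugate

section Fin

variable {R : Type*} [CommRing R] {k : ℕ}

theorem det_updateCol_single_one_eq_det_submatrix (A : Matrix (Fin (k + 1)) (Fin (k + 1)) R)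
    (i j : Fin (k + 1)) :
    (A.updateCol j (Pi.single i 1)).det =
      (-1) ^ (i + j : ℕ) * (A.submatrix i.succAbove j.succAbove).det := by
  rw [det_updateCol_single_one, adjugate_fin_succ_eq_det_submatrix]

theorem det_updateCol_single_one_updateCol_single_one_eq_det_submatrix
    (A : Matrix (Fin (k + 2)) (Fin (k + 2)) R) {a b c d : Fin (k + 2)} {a' c' : Fin (k + 1)}
    (ha : b.succAbove a' = a) (hc : d.succAbove c' = c) :
    ((A.updateCol c (Pi.single a 1)).updateCol d (Pi.single b 1)).det =
      (-1) ^ (b + d : ℕ) * ((-1) ^ (a' + c' : ℕ) *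
        ((A.submatrix b.succAbove d.succAbove).submatrix a'.succAbove c'.succAbove).det) := by
  subst ha hc
  have hsingle : Pi.single (b.succAbove a') (1 : R) ∘ b.succAbove = Pi.single a' 1 :=
    Function.update_comp_eq_of_injective _ Fin.succAbove_right_injective _ _
  rw [det_updateCol_single_one_eq_det_submatrix,
    submatrix_updateCol_of_injective _ Fin.succAbove_right_injective, hsingle,
    det_updateCol_single_one_eq_det_submatrix]

end Fin

end Matrix

open Matrix

/-- Generalized Dodgson condensation (Desnanot–Jacobi) identity: for an `n × n` matrix
`M` (here `n+2 ≥ 2`), rows `a < b` and columns `c < d`,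
`det(M^{≠a}_{≠c})·det(M^{≠b}_{≠d}) = det(M)·det(M^{≠a,b}_{≠c,d}) + det(M^{≠b}_{≠c})·det(M^{≠a}_{≠d})`. -/
theorem desnanot_jacobi {R : Type*} [CommRing R] {n : ℕ}
    (M : Matrix (Fin (n + 2)) (Fin (n + 2)) R)
    (a b : Fin (n + 2)) (hab : a < b)
    (c d : Fin (n + 2)) (hcd : c < d) :
    (M.submatrix a.succAbove c.succAbove).det * (M.submatrix b.succAbove d.succAbove).det
    = M.det *
        ((M.submatrix b.succAbove d.succAbove).submatrix
          (Fin.succAbove ⟨a.val, by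
            have h1 : a.val < b.val := hab
            have h2 : b.val < n + 2 := b.isLt
            omega⟩)
          (Fin.succAbove ⟨c.val, by
            have h1 : c.val < d.val := hcd
            have h2 : d.val < n + 2 := d.isLt
            omega⟩)).det
      + (M.submatrix b.succAbove c.succAbove).det *
          (M.submatrix a.succAbove d.succAbove).det := by
  set a' : Fin (n + 1) := ⟨a, by omega⟩
  set c' : Fin (n + 1) := ⟨c, by omega⟩
  have key := adjugate_mul_adjugate_sub_adjugate_mul_adjugate M hcd.ne a b
  rw [det_updateCol_single_one_updateCol_single_one_eq_det_submatrix M (a' := a') (c' := c')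
      (Fin.succAbove_castPred_of_lt b a hab) (Fin.succAbove_castPred_of_lt d c hcd),
    show (a' : ℕ) = a from rfl, show (c' : ℕ) = c from rfl] at key
  simp only [adjugate_fin_succ_eq_det_submatrix] at key
  have hsign : IsUnit ((-1 : R) ^ (a + b + c + d : ℕ)) := isUnit_neg_one.pow _
  refine eq_add_of_sub_eq (hsign.mul_left_cancel ?_)
  linear_combination key
end

section
/- Roots of the characteristic polynomial of an annular 'string of loops' network: Let n ≥ 1, let a₁,…,a_{n−1} and b₁,…,b_n be positive reals, and set a₀ = a_n = 0. For z ∈ ℂ∖{0} let D(z) be the n×n matrix with diagonal entries D(z)_{ii} = a_{i−1} + a_i + b_i(2 − z − z⁻¹), off-diagonal entries D(z)_{i,i+1} = D(z)_{i+1,i} = −a_i for 1 ≤ i ≤ n−1, and all other entries 0. Then there is a polynomial Q with real coefficients of degree exactly 2n such that Q(z) = zⁿ·det D(z) for all z ≠ 0, and Q satisfies: (i) Q(z) = z^{2n}·Q(1/z) for all z ≠ 0; (ii) every complex root of Q is a positive real number; (iii) z = 1 is a root of Q of multiplicity exactly 2; (iv) every root of Q other than 1 is a simple root. -/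
open Matrix Polynomial

/-- The line-bundle Laplacian `D(z)` (with monodromy `z`) of a "string of loops" network
on an annulus: an `n × n` symmetric tridiagonal matrix with diagonal entries
`a_{i-1} + a_i + b_i (2 - z - z⁻¹)` (1-based indexing, with `a₀ = aₙ = 0` supplied by the
functions `a`, `b`) and off-diagonal entries `D(z)_{i,i+1} = D(z)_{i+1,i} = -a_i`. -/
noncomputable def stringOfLoopsLap (n : ℕ) (a b : ℕ → ℝ) (z : ℂ) :
    Matrix (Fin n) (Fin n) ℂ :=
  Matrix.of fun i j =>
    if i = j then (a i.val : ℂ) + (a (i.val + 1) : ℂ) + (b (i.val + 1) : ℂ) * (2 - z - z⁻¹)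
    else if i.val + 1 = j.val then -(a (i.val + 1) : ℂ)
    else if j.val + 1 = i.val then -(a (j.val + 1) : ℂ)
    else 0

/-!
Write `w = 2 - z - z⁻¹`. Then `D(z) = L + w B`, where `L` is the weighted path Laplacian and
`B = diag b`, and conjugating by `B^{-1/2}` gives `det D(z) = det B · ∏ᵢ (w + μᵢ)`, the `μᵢ` being
the eigenvalues of the symmetric matrix `M = B^{-1/2} L B^{-1/2}`. Hence
`zⁿ det D(z) = (-1)ⁿ det B · ∏ᵢ (z² - (2 + μᵢ) z + 1)`, a product of self-reciprocal quadratics.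
As `L` is positive semidefinite and annihilates the constant vector, all `μᵢ ≥ 0` and some `μᵢ = 0`;
as `M` is tridiagonal with nonzero off-diagonal entries, an eigenvector is determined by its first
coordinate, so the `μᵢ` are distinct. A factor `z² - c z + 1` with `c ≥ 2` has two positive roots
`r, r⁻¹`, which coincide (at `1`) exactly when `c = 2`; and a root `z` determines `c = z + z⁻¹`,
so distinct factors have no common root.
-/

namespace Polynomial

theorem rootMultiplicity_prod {R ι : Type*} [CommRing R] [IsDomain R] (s : Finset ι)
    (f : ι → R[X]) (h : ∏ i ∈ s, f i ≠ 0) (x : R) :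
    (∏ i ∈ s, f i).rootMultiplicity x = ∑ i ∈ s, (f i).rootMultiplicity x := by
  classical
  simp only [← count_roots, roots_prod f s h, Multiset.count_bind, Finset.sum_eq_multiset_sum]

noncomputable def recipQuadratic {R : Type*} [CommRing R] (c : R) : R[X] := X ^ 2 - C c * X + 1

section recipQuadratic

variable {R : Type*} [CommRing R]

theorem recipQuadratic_monic [Nontrivial R] (c : R) : (recipQuadratic c).Monic := by
  unfold recipQuadratic; monicity!

theorem natDegree_recipQuadratic [Nontrivial R] (c : R) : (recipQuadratic c).natDegree = 2 := by
  unfold recipQuadratic; compute_degree!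

@[simp]
theorem eval_recipQuadratic (c x : R) : (recipQuadratic c).eval x = x ^ 2 - c * x + 1 := by
  simp [recipQuadratic]

theorem map_recipQuadratic {S : Type*} [CommRing S] (f : R →+* S) (c : R) :
    (recipQuadratic c).map f = recipQuadratic (f c) := by
  simp [recipQuadratic]

theorem recipQuadratic_two : recipQuadratic (2 : R) = (X - C 1) ^ 2 := by
  simp only [recipQuadratic, map_one]
  rw [show (C 2 : R[X]) = 2 from rfl]
  ring

theorem eval_recipQuadratic_eq_pow_mul_eval_inv {K : Type*} [Field K] (c : K) {z : K}
    (hz : z ≠ 0) : (recipQuadratic c).eval z = z ^ 2 * (recipQuadratic c).eval z⁻¹ := by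
  simp only [eval_recipQuadratic]
  field_simp
  ring

theorem eq_add_inv_of_isRoot_recipQuadratic {K : Type*} [Field K] {c x : K}
    (h : (recipQuadratic c).IsRoot x) : c = x + x⁻¹ := by
  have hx : x ^ 2 - c * x + 1 = 0 := by simpa using h
  have hx0 : x ≠ 0 := by rintro rfl; simp at hx
  field_simp
  linear_combination -hx

theorem rootMultiplicity_recipQuadratic_eq_one [IsDomain R] {c x : R}
    (h : (recipQuadratic c).IsRoot x) (h1 : x ≠ 1) (hm1 : x ≠ -1) :
    (recipQuadratic c).rootMultiplicity x = 1 := by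
  have hne := (recipQuadratic_monic c).ne_zero
  have hpos := (rootMultiplicity_pos hne).2 h
  have hle : ¬ 1 < (recipQuadratic c).rootMultiplicity x := by
    rw [one_lt_rootMultiplicity_iff_isRoot hne]
    rintro ⟨hroot, hderiv⟩
    have hx : x ^ 2 - c * x + 1 = 0 := by simpa using hroot
    have hd : 2 * x - c = 0 := by
      simp [recipQuadratic] at hderiv
      linear_combination hderiv
    have : (x - 1) * (x + 1) = 0 := by linear_combination -hx + x * hd
    rcases mul_eq_zero.1 this with h | h
    exacts [h1 (sub_eq_zero.1 h), hm1 (eq_neg_of_add_eq_zero_left h)]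
  omega

theorem rootMultiplicity_prod_recipQuadratic {K ι : Type*} [Field K] [Fintype ι] {c : ι → K}
    (hc : Function.Injective c) {x : K} {i : ι} (hx : (recipQuadratic (c i)).IsRoot x) :
    (∏ j, recipQuadratic (c j)).rootMultiplicity x = (recipQuadratic (c i)).rootMultiplicity x := by
  rw [rootMultiplicity_prod _ _
      (Finset.prod_ne_zero_iff.2 fun j _ => (recipQuadratic_monic _).ne_zero),
    Finset.sum_eq_single i (fun j _ hji => rootMultiplicity_eq_zero fun hxj => hji (hc ?_))
      (by simp)]
  rw [eq_add_inv_of_isRoot_recipQuadratic hxj, eq_add_inv_of_isRoot_recipQuadratic hx]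

theorem exists_pos_of_isRoot_recipQuadratic {c : ℝ} (hc : 2 ≤ c) {w : ℂ}
    (hw : (recipQuadratic (c : ℂ)).IsRoot w) : ∃ x : ℝ, 0 < x ∧ w = x := by
  have hdisc : (0 : ℝ) ≤ c ^ 2 - 4 := by nlinarith
  set d := √(c ^ 2 - 4)
  have hd : d ^ 2 = c ^ 2 - 4 := Real.sq_sqrt hdisc
  have hdc : d < c := by nlinarith [Real.sqrt_nonneg (c ^ 2 - 4)]
  have hdc' : -c < d := by nlinarith [Real.sqrt_nonneg (c ^ 2 - 4)]
  have hfactor : (w - ((c + d) / 2 : ℝ)) * (w - ((c - d) / 2 : ℝ)) = 0 := by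
    have hw' : w ^ 2 - c * w + 1 = 0 := by simpa using hw
    have hd' : (d : ℂ) ^ 2 = c ^ 2 - 4 := by exact_mod_cast hd
    push_cast
    linear_combination hw' - hd' / 4
  rcases mul_eq_zero.1 hfactor with h | h
  · exact ⟨_, by linarith, sub_eq_zero.1 h⟩
  · exact ⟨_, by linarith, sub_eq_zero.1 h⟩

end recipQuadratic

end Polynomial

namespace Matrix

variable {ι : Type*} [Fintype ι] [DecidableEq ι]

theorem det_eq_prod_mul_det_diagonal_mul_diagonal {R : Type*} [CommRing R] (A : Matrix ι ι R)
    {d s : ι → R} (hs : ∀ i, s i * d i * s i = 1) :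
    A.det = (∏ i, d i) * (diagonal s * A * diagonal s).det := by
  rw [det_mul, det_mul, det_diagonal]
  calc A.det = (∏ i, s i * d i * s i) * A.det := by simp [hs]
    _ = _ := by rw [Finset.prod_mul_distrib, Finset.prod_mul_distrib]; ring

theorem IsHermitian.det_map_add_smul_one {A : Matrix ι ι ℝ} (hA : A.IsHermitian) (w : ℂ) :
    (A.map (algebraMap ℝ ℂ) + w • 1).det = ∏ i, (w + hA.eigenvalues i) := by
  have h := congrArg (fun p => (p.map (algebraMap ℝ ℂ)).eval (-w)) hA.charpoly_eq
  simp only [← charpoly_map, eval_charpoly, Polynomial.map_prod, Polynomial.map_sub, map_X,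
    map_C, eval_prod, eval_sub, eval_X, eval_C] at h
  rw [show A.map (algebraMap ℝ ℂ) + w • 1 = -(scalar ι (-w) - A.map (algebraMap ℝ ℂ)) by
      rw [neg_sub, scalar_apply, ← smul_one_eq_diagonal, neg_smul, sub_neg_eq_add],
    det_neg, h, ← Finset.card_univ, ← Finset.prod_neg]
  exact Finset.prod_congr rfl fun i _ => by simp [add_comm]

/-- Gershgorin: under these sign conditions every disc `|μ - A k k| ≤ A k k - ∑ j, A k j` lies in
`[0, ∞)`. -/
theorem IsHermitian.posSemidef_of_offDiag_nonpos {A : Matrix ι ι ℝ} (hA : A.IsHermitian)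
    (hoff : ∀ i j, i ≠ j → A i j ≤ 0) (hrow : ∀ i, 0 ≤ ∑ j, A i j) : A.PosSemidef := by
  refine hA.posSemidef_iff_eigenvalues_nonneg.2 fun i => ?_
  show 0 ≤ hA.eigenvalues i
  have hμ : Module.End.HasEigenvalue (toLin' A) (hA.eigenvalues i) := by
    rw [Module.End.hasEigenvalue_iff_mem_spectrum, spectrum_toLin']
    exact hA.eigenvalues_mem_spectrum_real i
  obtain ⟨k, hk⟩ := eigenvalue_mem_ball hμ
  have hradius : ∑ j ∈ Finset.univ.erase k, ‖A k j‖ = A k k - ∑ j, A k j := by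
    rw [Finset.sum_congr rfl fun j hj => by
        rw [Real.norm_of_nonpos (hoff k j (Finset.ne_of_mem_erase hj).symm)],
      Finset.sum_neg_distrib, Finset.sum_erase_eq_sub (Finset.mem_univ k), neg_sub]
  rw [Metric.mem_closedBall, Real.dist_eq, hradius] at hk
  linarith [(abs_le.1 hk).1, hrow k]

/-- Row `m` of `A *ᵥ x = 0` determines `x (m + 1)` from `x 0, …, x m`. -/
theorem eq_zero_of_mulVec_eq_zero_of_apply_zero {R : Type*} [Semiring R] [NoZeroDivisors R]
    {n : ℕ} [NeZero n] {A : Matrix (Fin n) (Fin n) R}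
    (hupper : ∀ i j : Fin n, (i : ℕ) + 1 < j → A i j = 0)
    (hsuper : ∀ i j : Fin n, (i : ℕ) + 1 = j → A i j ≠ 0)
    {x : Fin n → R} (hx : A *ᵥ x = 0) (h0 : x 0 = 0) : x = 0 := by
  suffices ∀ m : ℕ, ∀ j : Fin n, (j : ℕ) ≤ m → x j = 0 from funext fun j => this j j le_rfl
  intro m
  induction m with
  | zero => intro j hj; rwa [show j = 0 from Fin.ext (by simpa using hj)]
  | succ m ih =>
    intro j hj
    rcases Nat.lt_or_ge (j : ℕ) (m + 1) with hlt | hge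
    · exact ih j (by omega)
    let p : Fin n := ⟨m, by omega⟩
    have hrow : ∑ l, A p l * x l = 0 := congrFun hx p
    rw [Finset.sum_eq_single j] at hrow
    · exact (mul_eq_zero.1 hrow).resolve_left (hsuper p j (by simp [p]; omega))
    · intro l _ hl
      have hl' : (l : ℕ) ≠ j := fun h => hl (Fin.ext h)
      rcases Nat.lt_or_ge (l : ℕ) (m + 1) with h | h
      · rw [ih l (by omega), mul_zero]
      · rw [hupper p l (by simp [p]; omega), zero_mul]
    · simp

/-- Two orthonormal eigenvectors for one eigenvalue would have a nonzero combination vanishing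
at `k`. -/
theorem IsHermitian.eigenvalues_injective {𝕜 : Type*} [RCLike 𝕜] {A : Matrix ι ι 𝕜}
    (hA : A.IsHermitian) (k : ι)
    (h : ∀ (μ : 𝕜) (x : ι → 𝕜), A *ᵥ x = μ • x → x k = 0 → x = 0) :
    Function.Injective hA.eigenvalues := by
  intro i j hij
  by_contra hne
  set e := hA.eigenvectorBasis
  set μ : 𝕜 := (hA.eigenvalues i : 𝕜)
  have hv : A *ᵥ (e i).ofLp = μ • (e i).ofLp := by
    rw [hA.mulVec_eigenvectorBasis, RCLike.real_smul_eq_coe_smul (K := 𝕜)]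
  have hu : A *ᵥ (e j).ofLp = μ • (e j).ofLp := by
    rw [hA.mulVec_eigenvectorBasis, RCLike.real_smul_eq_coe_smul (K := 𝕜), ← hij]
  have hcomb : (e j k) • e i + (-e i k) • e j = 0 := by
    refine WithLp.ofLp_injective 2 (h μ _ ?_ (by simp [mul_comm]))
    simp only [WithLp.ofLp_add, WithLp.ofLp_smul, mulVec_add, mulVec_smul, hv, hu,
      smul_comm _ μ, smul_add]
  have hli : LinearIndependent 𝕜 ![e i, e j] := by
    rw [show ![e i, e j] = e ∘ ![i, j] by ext l; fin_cases l <;> rfl]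
    exact e.orthonormal.linearIndependent.comp ![i, j]
      (by intro a b; fin_cases a <;> fin_cases b <;> simp [hne, Ne.symm hne])
  have hvk : e i k = 0 := neg_eq_zero.1 (LinearIndependent.pair_iff.1 hli _ _ hcomb).2
  refine e.orthonormal.ne_zero i (WithLp.ofLp_injective 2 ?_)
  exact h μ _ hv hvk

end Matrix

theorem Fin.sum_ite_add_one_eq_val {M : Type*} [AddCommMonoid M] {n : ℕ} (i : ℕ) (c : M) :
    ∑ j : Fin n, (if i + 1 = (j : ℕ) then c else 0) = if i + 1 < n then c else 0 := by
  rw [Fin.sum_univ_eq_sum_range (fun j => if i + 1 = j then c else 0), Finset.sum_ite_eq]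
  simp

theorem Fin.sum_ite_val_add_one_eq {M : Type*} [AddCommMonoid M] {n : ℕ} (i : ℕ) (f : ℕ → M) :
    ∑ j : Fin n, (if (j : ℕ) + 1 = i then f (j + 1) else 0) =
      if 0 < i ∧ i ≤ n then f i else 0 := by
  rw [Fin.sum_univ_eq_sum_range (fun j => if j + 1 = i then f (j + 1) else 0)]
  rcases i with _ | i
  · simp
  · simp only [Nat.add_right_cancel_iff, Finset.sum_ite_eq', Finset.mem_range]
    split_ifs <;> first | rfl | omega

namespace StringOfLoops

open Polynomial

def pathUpperAdjacency (n : ℕ) (a : ℕ → ℝ) : Matrix (Fin n) (Fin n) ℝ :=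
  of fun i j => if i.val + 1 = j then a (i.val + 1) else 0

def pathLaplacian (n : ℕ) (a : ℕ → ℝ) : Matrix (Fin n) (Fin n) ℝ :=
  diagonal (fun i : Fin n => a i + a (i.val + 1)) - pathUpperAdjacency n a
    - (pathUpperAdjacency n a)ᵀ

variable {n : ℕ} {a b : ℕ → ℝ}

theorem stringOfLoopsLap_eq (z : ℂ) :
    stringOfLoopsLap n a b z = (pathLaplacian n a).map (algebraMap ℝ ℂ)
      + (2 - z - z⁻¹) • diagonal fun i => (b (i.val + 1) : ℂ) := by
  ext i j
  by_cases hij : i = j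
  · subst hij; simp [stringOfLoopsLap, pathLaplacian, pathUpperAdjacency]; ring
  · by_cases h1 : i.val + 1 = j.val
    · have h2 : ¬ j.val + 1 = i.val := by omega
      simp [stringOfLoopsLap, pathLaplacian, pathUpperAdjacency, hij, h1, h2]
    · by_cases h2 : j.val + 1 = i.val <;>
        simp [stringOfLoopsLap, pathLaplacian, pathUpperAdjacency, hij, h1, h2]

theorem pathLaplacian_isHermitian : (pathLaplacian n a).IsHermitian := by
  rw [IsHermitian, conjTranspose_eq_transpose_of_trivial, pathLaplacian, transpose_sub,
    transpose_sub, diagonal_transpose, transpose_transpose]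
  abel

theorem pathLaplacian_mulVec_one (ha0 : a 0 = 0) (han : a n = 0) :
    pathLaplacian n a *ᵥ 1 = 0 := by
  ext i
  simp only [mulVec, dotProduct, Pi.one_apply, mul_one, pathLaplacian, pathUpperAdjacency,
    Matrix.sub_apply, diagonal_apply, transpose_apply, of_apply, Finset.sum_sub_distrib,
    Finset.sum_ite_eq, Finset.mem_univ, if_true, Fin.sum_ite_add_one_eq_val,
    Fin.sum_ite_val_add_one_eq, Pi.zero_apply]
  have := i.isLt
  split_ifs with h1 h2 h2
  · ring
  · rw [show (i : ℕ) = 0 by omega, ha0]; ring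
  · rw [show (i : ℕ) + 1 = n by omega, han]; ring
  · rw [show (i : ℕ) + 1 = n by omega, han, show (i : ℕ) = 0 by omega, ha0]; ring

theorem pathLaplacian_posSemidef (ha : ∀ m ≤ n, 0 ≤ a m) (ha0 : a 0 = 0) (han : a n = 0) :
    (pathLaplacian n a).PosSemidef := by
  refine pathLaplacian_isHermitian.posSemidef_of_offDiag_nonpos (fun i j hij => ?_) fun i => ?_
  · have hsuper : 0 ≤ if i.val + 1 = j then a (i.val + 1) else 0 := by
      split_ifs <;> first | exact ha _ (by omega) | exact le_rfl
    have hsub : 0 ≤ if j.val + 1 = i then a (j.val + 1) else 0 := by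
      split_ifs <;> first | exact ha _ (by omega) | exact le_rfl
    simp only [pathLaplacian, pathUpperAdjacency, Matrix.sub_apply, diagonal_apply_ne _ hij,
      transpose_apply, of_apply]
    linarith
  · have := congrFun (pathLaplacian_mulVec_one ha0 han) i
    simp only [mulVec, dotProduct, Pi.one_apply, mul_one, Pi.zero_apply] at this
    rw [this]

theorem det_pathLaplacian [NeZero n] (ha0 : a 0 = 0) (han : a n = 0) :
    (pathLaplacian n a).det = 0 :=
  exists_mulVec_eq_zero_iff.1 ⟨1, one_ne_zero, pathLaplacian_mulVec_one ha0 han⟩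

noncomputable def loopScaling (n : ℕ) (b : ℕ → ℝ) : Matrix (Fin n) (Fin n) ℝ :=
  diagonal fun i => (√(b (i.val + 1)))⁻¹

noncomputable def scaledLaplacian (n : ℕ) (a b : ℕ → ℝ) : Matrix (Fin n) (Fin n) ℝ :=
  loopScaling n b * pathLaplacian n a * loopScaling n b

theorem scaledLaplacian_isHermitian : (scaledLaplacian n a b).IsHermitian := by
  simpa [scaledLaplacian, loopScaling] using
    isHermitian_conjTranspose_mul_mul (loopScaling n b) (pathLaplacian_isHermitian (a := a))

noncomputable def loopSpectrum (n : ℕ) (a b : ℕ → ℝ) : Fin n → ℝ :=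
  (scaledLaplacian_isHermitian (n := n) (a := a) (b := b)).eigenvalues

theorem loopSpectrum_nonneg (ha : ∀ m ≤ n, 0 ≤ a m) (ha0 : a 0 = 0) (han : a n = 0)
    (i : Fin n) : 0 ≤ loopSpectrum n a b i := by
  have hM : (scaledLaplacian n a b).PosSemidef := by
    simpa [scaledLaplacian, loopScaling] using
      (pathLaplacian_posSemidef ha ha0 han).conjTranspose_mul_mul_same (loopScaling n b)
  exact hM.eigenvalues_nonneg i

theorem exists_loopSpectrum_eq_zero [NeZero n] (ha0 : a 0 = 0) (han : a n = 0) :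
    ∃ i, loopSpectrum n a b i = 0 := by
  have hdet : (scaledLaplacian n a b).det = 0 := by
    rw [scaledLaplacian, det_mul, det_mul, det_pathLaplacian ha0 han, mul_zero, zero_mul]
  rw [scaledLaplacian_isHermitian.det_eq_prod_eigenvalues, Finset.prod_eq_zero_iff] at hdet
  obtain ⟨i, -, hi⟩ := hdet
  exact ⟨i, by simpa [loopSpectrum] using hi⟩

theorem loopSpectrum_injective [NeZero n] (hapos : ∀ i, 1 ≤ i → i ≤ n - 1 → 0 < a i)
    (hbpos : ∀ i, 1 ≤ i → i ≤ n → 0 < b i) : Function.Injective (loopSpectrum n a b) := by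
  have hs : ∀ i : Fin n, (√(b (i.val + 1)))⁻¹ ≠ 0 := fun i =>
    inv_ne_zero (Real.sqrt_ne_zero'.2 (hbpos _ (by omega) (by omega)))
  refine scaledLaplacian_isHermitian.eigenvalues_injective 0 fun μ x hx hx0 => ?_
  refine eq_zero_of_mulVec_eq_zero_of_apply_zero (A := scaledLaplacian n a b - μ • 1)
    (fun i j hij => ?_) (fun i j hij => ?_)
    (by rw [sub_mulVec, smul_mulVec, one_mulVec, hx, sub_self]) hx0
  · have hij' : i ≠ j := fun h => by subst h; omega
    simp [scaledLaplacian, loopScaling, pathLaplacian, pathUpperAdjacency, diagonal_mul,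
      mul_diagonal, hij', show ¬ (i : ℕ) + 1 = j by omega, show ¬ (j : ℕ) + 1 = i by omega]
  · have hij' : i ≠ j := fun h => by subst h; omega
    have ha : a j ≠ 0 := (hapos _ (by omega) (by omega)).ne'
    have hb : √(b j) ≠ 0 := Real.sqrt_ne_zero'.2 (hbpos _ (by omega) (by omega))
    simp [scaledLaplacian, loopScaling, pathLaplacian, pathUpperAdjacency, diagonal_mul,
      mul_diagonal, hij', hij, show ¬ (j : ℕ) + 1 = i by omega, hs, ha, hb]

theorem det_stringOfLoopsLap (hbpos : ∀ i, 1 ≤ i → i ≤ n → 0 < b i) (z : ℂ) :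
    (stringOfLoopsLap n a b z).det =
      (∏ i : Fin n, (b (i.val + 1) : ℂ)) * ∏ i, (2 - z - z⁻¹ + loopSpectrum n a b i) := by
  have hb : ∀ i : Fin n, 0 < b (i.val + 1) := fun i => hbpos _ (by omega) (by omega)
  have hs : ∀ i : Fin n, (√(b (i.val + 1)))⁻¹ * b (i.val + 1) * (√(b (i.val + 1)))⁻¹ = 1 :=
    fun i => by
      have := Real.sq_sqrt (hb i).le
      field_simp [(Real.sqrt_pos.2 (hb i)).ne']
      linarith
  rw [det_eq_prod_mul_det_diagonal_mul_diagonal (stringOfLoopsLap n a b z)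
      (d := fun i => (b (i.val + 1) : ℂ)) (s := fun i => (((√(b (i.val + 1)))⁻¹ : ℝ) : ℂ))
      (fun i => by exact_mod_cast hs i), loopSpectrum,
    ← scaledLaplacian_isHermitian.det_map_add_smul_one]
  congr 2
  ext i j
  by_cases hij : i = j
  · subst hij
    simp [stringOfLoopsLap_eq, scaledLaplacian, loopScaling, diagonal_mul, mul_diagonal]
    have hsc : ((√(b (i.val + 1)) : ℂ))⁻¹ * b (i.val + 1) * ((√(b (i.val + 1)) : ℂ))⁻¹ = 1 := by
      exact_mod_cast hs i
    linear_combination (2 - z - z⁻¹) * hsc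
  · simp [stringOfLoopsLap_eq, scaledLaplacian, loopScaling, diagonal_mul, mul_diagonal, hij]

noncomputable def loopPolynomial (n : ℕ) (a b : ℕ → ℝ) : ℝ[X] :=
  C ((-1) ^ n * ∏ i : Fin n, b (i.val + 1)) * ∏ i, recipQuadratic (2 + loopSpectrum n a b i)

theorem neg_one_pow_mul_prod_ne_zero (hbpos : ∀ i, 1 ≤ i → i ≤ n → 0 < b i) :
    (-1) ^ n * ∏ i : Fin n, b (i.val + 1) ≠ 0 :=
  mul_ne_zero (pow_ne_zero _ (by norm_num))
    (Finset.prod_ne_zero_iff.2 fun _ _ => (hbpos _ (by omega) (by omega)).ne')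

theorem map_loopPolynomial : (loopPolynomial n a b).map (algebraMap ℝ ℂ) =
    C (((-1) ^ n * ∏ i : Fin n, b (i.val + 1) : ℝ) : ℂ) *
      ∏ i, recipQuadratic ((2 + loopSpectrum n a b i : ℝ) : ℂ) := by
  simp only [loopPolynomial, Polynomial.map_mul, map_C, Polynomial.map_prod, map_recipQuadratic]
  rfl

theorem degree_loopPolynomial (hbpos : ∀ i, 1 ≤ i → i ≤ n → 0 < b i) :
    (loopPolynomial n a b).degree = (2 * n : ℕ) := by
  have hmonic : (∏ i, recipQuadratic (2 + loopSpectrum n a b i)).Monic :=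
    monic_prod_of_monic _ _ fun i _ => recipQuadratic_monic _
  rw [loopPolynomial, degree_C_mul (neg_one_pow_mul_prod_ne_zero hbpos),
    degree_eq_natDegree hmonic.ne_zero,
    natDegree_prod_of_monic _ _ fun i _ => recipQuadratic_monic _]
  simp [natDegree_recipQuadratic, mul_comm]

theorem eval_loopPolynomial (hbpos : ∀ i, 1 ≤ i → i ≤ n → 0 < b i) {z : ℂ} (hz : z ≠ 0) :
    ((loopPolynomial n a b).map (algebraMap ℝ ℂ)).eval z =
      z ^ n * (stringOfLoopsLap n a b z).det := by
  have hfactor : ∀ i, z * (2 - z - z⁻¹ + loopSpectrum n a b i) =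
      -(recipQuadratic ((2 + loopSpectrum n a b i : ℝ) : ℂ)).eval z := fun i => by
    simp only [eval_recipQuadratic]
    push_cast
    field_simp
    ring
  rw [map_loopPolynomial, det_stringOfLoopsLap hbpos, eval_mul, eval_C, eval_prod, mul_left_comm,
    ← Fin.prod_const n z, ← Finset.prod_mul_distrib, Finset.prod_congr rfl fun i _ => hfactor i,
    Finset.prod_neg, Finset.card_univ, Fintype.card_fin]
  push_cast
  ring

theorem eval_loopPolynomial_eq_pow_mul_eval_inv {z : ℂ} (hz : z ≠ 0) :
    ((loopPolynomial n a b).map (algebraMap ℝ ℂ)).eval z =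
      z ^ (2 * n) * ((loopPolynomial n a b).map (algebraMap ℝ ℂ)).eval z⁻¹ := by
  have hpow : z ^ (2 * n) = ∏ _i : Fin n, z ^ 2 := by
    rw [Finset.prod_const, Finset.card_univ, Fintype.card_fin, ← pow_mul]
  simp only [map_loopPolynomial, eval_mul, eval_C, eval_prod]
  rw [hpow, mul_left_comm, ← Finset.prod_mul_distrib]
  exact congrArg _ (Finset.prod_congr rfl fun i _ => eval_recipQuadratic_eq_pow_mul_eval_inv _ hz)

theorem exists_isRoot_of_isRoot_loopPolynomial (hbpos : ∀ i, 1 ≤ i → i ≤ n → 0 < b i) {w : ℂ}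
    (hw : ((loopPolynomial n a b).map (algebraMap ℝ ℂ)).IsRoot w) :
    ∃ i, (recipQuadratic ((2 + loopSpectrum n a b i : ℝ) : ℂ)).IsRoot w := by
  rw [map_loopPolynomial, IsRoot, eval_mul, eval_C, mul_eq_zero, eval_prod,
    Finset.prod_eq_zero_iff] at hw
  rcases hw with hK | ⟨i, -, hi⟩
  · exact absurd hK (by exact_mod_cast neg_one_pow_mul_prod_ne_zero hbpos)
  · exact ⟨i, hi⟩

theorem rootMultiplicity_loopPolynomial (hbpos : ∀ i, 1 ≤ i → i ≤ n → 0 < b i)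
    (hinj : Function.Injective (loopSpectrum n a b)) {w : ℂ} {i : Fin n}
    (hi : (recipQuadratic ((2 + loopSpectrum n a b i : ℝ) : ℂ)).IsRoot w) :
    ((loopPolynomial n a b).map (algebraMap ℝ ℂ)).rootMultiplicity w =
      (recipQuadratic ((2 + loopSpectrum n a b i : ℝ) : ℂ)).rootMultiplicity w := by
  have hK : (((-1) ^ n * ∏ i : Fin n, b (i.val + 1) : ℝ) : ℂ) ≠ 0 := by
    exact_mod_cast neg_one_pow_mul_prod_ne_zero hbpos
  have hc : Function.Injective fun j => ((2 + loopSpectrum n a b j : ℝ) : ℂ) :=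
    Complex.ofReal_injective.comp ((add_right_injective 2).comp hinj)
  rw [map_loopPolynomial, rootMultiplicity_mul (mul_ne_zero (C_ne_zero.2 hK)
      (Finset.prod_ne_zero_iff.2 fun j _ => (recipQuadratic_monic _).ne_zero)),
    rootMultiplicity_C, zero_add, rootMultiplicity_prod_recipQuadratic hc hi]

theorem exists_pos_of_isRoot_loopPolynomial (ha : ∀ m ≤ n, 0 ≤ a m) (ha0 : a 0 = 0)
    (han : a n = 0) (hbpos : ∀ i, 1 ≤ i → i ≤ n → 0 < b i) {w : ℂ}
    (hw : ((loopPolynomial n a b).map (algebraMap ℝ ℂ)).IsRoot w) :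
    ∃ x : ℝ, 0 < x ∧ w = x := by
  obtain ⟨i, hi⟩ := exists_isRoot_of_isRoot_loopPolynomial hbpos hw
  have hμ := loopSpectrum_nonneg (b := b) ha ha0 han i
  exact exists_pos_of_isRoot_recipQuadratic (by linarith) hi

end StringOfLoops

open StringOfLoops in
/-- Roots of the characteristic polynomial of an annular "string of loops" network:
there is a real polynomial `Q` of degree exactly `2n` with `Q(z) = zⁿ · det D(z)`, which
is reciprocal (`Q(z) = z^{2n} Q(1/z)`), whose complex roots are all positive reals,
with a double root at `z = 1` and all other roots simple. -/
theorem string_of_loops_roots (n : ℕ) (hn : 1 ≤ n) (a b : ℕ → ℝ)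
    (ha0 : a 0 = 0) (han : a n = 0)
    (hapos : ∀ i, 1 ≤ i → i ≤ n - 1 → 0 < a i)
    (hbpos : ∀ i, 1 ≤ i → i ≤ n → 0 < b i) :
    ∃ Q : Polynomial ℝ,
      Q.degree = (2 * n : ℕ) ∧
      (∀ z : ℂ, z ≠ 0 →
        (Q.map (algebraMap ℝ ℂ)).eval z = z ^ n * (stringOfLoopsLap n a b z).det) ∧
      (∀ z : ℂ, z ≠ 0 →
        (Q.map (algebraMap ℝ ℂ)).eval z = z ^ (2 * n) * (Q.map (algebraMap ℝ ℂ)).eval z⁻¹) ∧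
      (∀ w : ℂ, (Q.map (algebraMap ℝ ℂ)).IsRoot w → ∃ x : ℝ, 0 < x ∧ w = (x : ℂ)) ∧
      (Q.map (algebraMap ℝ ℂ)).rootMultiplicity 1 = 2 ∧
      (∀ w : ℂ, (Q.map (algebraMap ℝ ℂ)).IsRoot w → w ≠ 1 →
        (Q.map (algebraMap ℝ ℂ)).rootMultiplicity w = 1) := by
  have : NeZero n := ⟨by omega⟩
  have ha : ∀ m ≤ n, 0 ≤ a m := fun m hm => by
    rcases Nat.eq_zero_or_pos m with rfl | hm0
    · exact ha0.ge
    rcases hm.lt_or_eq with hlt | rfl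
    exacts [(hapos m hm0 (by omega)).le, han.ge]
  have hinj := loopSpectrum_injective hapos hbpos
  obtain ⟨i₀, hi₀⟩ := exists_loopSpectrum_eq_zero (b := b) ha0 han
  refine ⟨loopPolynomial n a b, degree_loopPolynomial hbpos, fun z => eval_loopPolynomial hbpos,
    fun z => eval_loopPolynomial_eq_pow_mul_eval_inv,
    fun w => exists_pos_of_isRoot_loopPolynomial ha ha0 han hbpos, ?_, fun w hw hw1 => ?_⟩
  · have h1 : (recipQuadratic ((2 + loopSpectrum n a b i₀ : ℝ) : ℂ)).IsRoot 1 := by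
      norm_num [hi₀]
    rw [rootMultiplicity_loopPolynomial hbpos hinj h1, hi₀, show ((2 + 0 : ℝ) : ℂ) = 2 by norm_num,
      recipQuadratic_two, rootMultiplicity_X_sub_C_pow]
  · obtain ⟨i, hi⟩ := exists_isRoot_of_isRoot_loopPolynomial hbpos hw
    obtain ⟨x, hx, rfl⟩ := exists_pos_of_isRoot_loopPolynomial ha ha0 han hbpos hw
    rw [rootMultiplicity_loopPolynomial hbpos hinj hi]
    exact rootMultiplicity_recipQuadratic_eq_one hi hw1 (mod_cast (neg_one_lt_zero.trans hx).ne')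
end
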